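/- arXiv:2005.07056 — 9 statements merged into one kernel-verified Lean document; each statement's English description precedes it below -/
import Mathlib

section
/- Let n be a positive integer and define the matrix A ∈ M_{n³,n}(ℂ) (rows indexed by triples (a,b,c) ∈ {1,…,n}³, columns by l ∈ {1,…,n}) by A((a,b,c), l) = 1/√n if a = b and l = c, and A((a,b,c), l) = 0 otherwise. Then: (i) AᴴA = 1_n; (ii) for every X ∈ M_n(ℂ) and all a, a' ∈ {1,…,n}, Σ_{b,c=1}^{n} (A X Aᴴ)((a,b,c),(a',b,c)) = (Tr X / n)·δ_{a,a'} (the partial trace of AXAᴴ over the last two tensor factors equals Ω_n(X)); and (iii) for every X ∈ M_n(ℂ) and all b,b',c,c' ∈ {1,…,n}, Σ_{a=1}^{n} (A X Aᴴ)((a,b,c),(a,b',c')) = (1/n)·δ_{b,b'}·X(c,c') (the partial trace of AXAᴴ over the first tensor factor equals (1/n)·1_n ⊗ X). -/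
/-!
`A` sends `x` to `(1/√n) ∑ₐ |a⟩ ⊗ |a⟩ ⊗ x`, so `A X Aᴴ = |Φ⟩⟨Φ| ⊗ X / n` with `Φ = ∑ₐ |a⟩ ⊗ |a⟩`:
its entry at `((a,b,c),(a',b',c'))` is `δ_{ab} δ_{a'b'} X(c,c') / n`. Both partial traces, and
`AᴴA`, are then sums of Kronecker deltas.
-/

open Matrix BigOperators

def entangledEmbedding (ι κ : Type*) {R : Type*} [DecidableEq ι] [DecidableEq κ] [Zero R]
    (s : R) : Matrix (ι × ι × κ) κ R :=
  of fun abc l => if abc.1 = abc.2.1 ∧ l = abc.2.2 then s else 0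

section EntangledEmbedding

variable {ι κ R : Type*} [DecidableEq ι] [DecidableEq κ]

@[simp]
lemma entangledEmbedding_apply [Zero R] (s : R) (a b : ι) (c l : κ) :
    entangledEmbedding ι κ s (a, b, c) l = if a = b ∧ l = c then s else 0 :=
  rfl

variable [Fintype κ] [CommRing R] [StarRing R]

lemma conjTranspose_entangledEmbedding_mul_self [Fintype ι] (s : R) :
    (entangledEmbedding ι κ s)ᴴ * entangledEmbedding ι κ s =
      ((Fintype.card ι : R) * (star s * s)) • (1 : Matrix κ κ R) := by
  ext l l'
  simp only [mul_apply, conjTranspose_apply, entangledEmbedding_apply, Fintype.sum_prod_type,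
    Matrix.smul_apply]
  by_cases h : l = l'
  · subst h; simp [ite_and, apply_ite star]
  · simp [h, ite_and, apply_ite star]

lemma entangledEmbedding_mul_mul_conjTranspose_apply (s : R) (X : Matrix κ κ R)
    (a b a' b' : ι) (c c' : κ) :
    (entangledEmbedding ι κ s * X * (entangledEmbedding ι κ s)ᴴ) (a, b, c) (a', b', c') =
      if a = b ∧ a' = b' then s * X c c' * star s else 0 := by
  simp only [mul_apply, conjTranspose_apply, entangledEmbedding_apply]
  by_cases h : a = b <;> by_cases h' : a' = b' <;> simp [h, h', apply_ite star]

lemma sum_sum_entangledEmbedding_mul_mul_conjTranspose_apply [Fintype ι] (s : R)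
    (X : Matrix κ κ R) (a a' : ι) :
    ∑ b, ∑ c, (entangledEmbedding ι κ s * X * (entangledEmbedding ι κ s)ᴴ) (a, b, c) (a', b, c) =
      if a = a' then s * X.trace * star s else 0 := by
  simp [entangledEmbedding_mul_mul_conjTranspose_apply, ite_and, trace, Finset.mul_sum,
    Finset.sum_mul, eq_comm]

lemma sum_entangledEmbedding_mul_mul_conjTranspose_apply [Fintype ι] (s : R)
    (X : Matrix κ κ R) (b b' : ι) (c c' : κ) :
    ∑ a, (entangledEmbedding ι κ s * X * (entangledEmbedding ι κ s)ᴴ) (a, b, c) (a, b', c') =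
      if b = b' then s * X c c' * star s else 0 := by
  simp [entangledEmbedding_mul_mul_conjTranspose_apply, ite_and, eq_comm]

end EntangledEmbedding

lemma star_one_div_sqrt_mul_self (n : ℕ) :
    star ((1 : ℂ) / (Real.sqrt n : ℂ)) * ((1 : ℂ) / (Real.sqrt n : ℂ)) = 1 / n := by
  rw [star_div₀, star_one, Complex.star_def, Complex.conj_ofReal, div_mul_div_comm, one_mul,
    ← Complex.ofReal_mul, Real.mul_self_sqrt n.cast_nonneg, Complex.ofReal_natCast]

/-- The isometry `A ∈ M_{n³,n}(ℂ)` with entries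
`A((a,b,c),l) = 1/√n` if `a = b` and `l = c` (else 0) satisfies `AᴴA = 1`,
and conjugation by `A` followed by the two partial traces yields the completely
depolarizing channel `Ω_n` and the complementary channel `X ↦ (1/n)·1_n ⊗ X`. -/
theorem stmt_0 (n : ℕ) (hn : 0 < n)
    (A : Matrix (Fin n × Fin n × Fin n) (Fin n) ℂ)
    (hA : ∀ (a b c l : Fin n),
      A (a, b, c) l = if a = b ∧ l = c then (1 : ℂ) / (Real.sqrt n : ℂ) else 0) :
    Aᴴ * A = 1 ∧
    (∀ (X : Matrix (Fin n) (Fin n) ℂ) (a a' : Fin n),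
      (∑ b : Fin n, ∑ c : Fin n, (A * X * Aᴴ) (a, b, c) (a', b, c)) =
        (Matrix.trace X / (n : ℂ)) * (if a = a' then 1 else 0)) ∧
    (∀ (X : Matrix (Fin n) (Fin n) ℂ) (b b' c c' : Fin n),
      (∑ a : Fin n, (A * X * Aᴴ) (a, b, c) (a, b', c')) =
        ((1 : ℂ) / (n : ℂ)) * (if b = b' then 1 else 0) * X c c') := by
  set s : ℂ := 1 / (Real.sqrt n : ℂ)
  obtain rfl : A = entangledEmbedding (Fin n) (Fin n) s := by
    ext ⟨a, b, c⟩ l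
    exact hA a b c l
  have hs : star s * s = 1 / n := star_one_div_sqrt_mul_self n
  have hconj (x : ℂ) : s * x * star s = x / n := by
    rw [show s * x * star s = x * (star s * s) by ring, hs, mul_one_div]
  refine ⟨?_, fun X a a' => ?_, fun X b b' c c' => ?_⟩
  · rw [conjTranspose_entangledEmbedding_mul_self, Fintype.card_fin, hs,
      mul_one_div_cancel (Nat.cast_ne_zero.mpr hn.ne'), one_smul]
  · rw [sum_sum_entangledEmbedding_mul_mul_conjTranspose_apply, hconj]
    split_ifs <;> simp
  · rw [sum_entangledEmbedding_mul_mul_conjTranspose_apply, hconj]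
    split_ifs <;> ring
end

section
/- Let n be a positive integer and let U_1, …, U_{n²} ∈ M_n(ℂ) be unitary matrices that are pairwise orthogonal with respect to the Hilbert–Schmidt inner product, i.e. Tr(U_jᴴ U_k) = 0 whenever j ≠ k. Then for every X ∈ M_n(ℂ), (1/n²) Σ_{k=1}^{n²} U_k X U_kᴴ = (Tr X / n)·1_n. -/
/-!
Stack the vectorizations of the `U k` as the columns of an `n² × n²` matrix `M`. Unitarity and
Hilbert–Schmidt orthogonality say `Mᴴ M = n • 1`; since `M` is square this forces `M Mᴴ = n • 1`,
i.e. `∑ₖ (U k) i a * conj ((U k) j b) = n δᵢⱼ δₐᵦ`, which is exactly the statement that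
`X ↦ ∑ₖ U k X (U k)ᴴ` is `X ↦ n (Tr X) 1`.
-/

open Matrix

namespace Matrix

variable {ι m n R : Type*}

theorem mul_eq_smul_one_comm_of_card_eq [Fintype m] [Fintype n] [DecidableEq m] [DecidableEq n]
    [Field R] {A : Matrix m n R} {B : Matrix n m R} {c : R} (hc : c ≠ 0)
    (hcard : Fintype.card m = Fintype.card n) (h : A * B = c • 1) : B * A = c • 1 := by
  have hAB : A * (c⁻¹ • B) = 1 := by
    rw [Matrix.mul_smul, h, smul_smul, inv_mul_cancel₀ hc, one_smul]
  have hBA := (mul_eq_one_comm_of_card_eq m n R hcard).mp hAB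
  calc B * A = c • (c⁻¹ • B * A) := by
        rw [Matrix.smul_mul, smul_smul, mul_inv_cancel₀ hc, one_smul]
    _ = c • 1 := by rw [hBA]

def vecCols (U : ι → Matrix m n R) : Matrix (n × m) ι R :=
  of fun p k => vec (U k) p

theorem conjTranspose_vecCols_mul_vecCols_apply [Fintype m] [Fintype n]
    [NonUnitalNonAssocSemiring R] [Star R] (U : ι → Matrix m n R) (j k : ι) :
    ((vecCols U)ᴴ * vecCols U) j k = ((U j)ᴴ * U k).trace := by
  rw [← star_vec_dotProduct_vec]
  rfl

theorem conjTranspose_vecCols_mul_vecCols_of_unitary [Fintype ι] [DecidableEq ι] [Fintype m]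
    [DecidableEq m] [NonAssocSemiring R] [Star R] {U : ι → Matrix m m R}
    (hU : ∀ k, (U k)ᴴ * U k = 1)
    (horth : ∀ j k, j ≠ k → ((U j)ᴴ * U k).trace = 0) :
    (vecCols U)ᴴ * vecCols U = (Fintype.card m : R) • 1 := by
  ext j k
  rw [conjTranspose_vecCols_mul_vecCols_apply, smul_apply, one_apply]
  by_cases hjk : j = k
  · simp [hjk, hU]
  · simp [hjk, horth j k hjk]

theorem sum_mul_mul_conjTranspose_eq_smul_trace [Fintype ι] [Fintype m] [DecidableEq m]
    [CommSemiring R] [Star R] {U : ι → Matrix m m R} {r : R}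
    (hM : vecCols U * (vecCols U)ᴴ = r • 1) (X : Matrix m m R) :
    ∑ k, U k * X * (U k)ᴴ = (r * X.trace) • 1 := by
  have hcompl (i a j b : m) : ∑ k, U k i a * star (U k j b) = if a = b ∧ i = j then r else 0 := by
    simpa only [mul_apply, conjTranspose_apply, vecCols, of_apply, vec, smul_apply, one_apply,
      Prod.mk.injEq, smul_eq_mul, mul_ite, mul_one, mul_zero] using congrFun₂ hM (a, i) (b, j)
  ext i j
  calc (∑ k, U k * X * (U k)ᴴ) i j
      = ∑ b, ∑ a, X a b * ∑ k, U k i a * star (U k j b) := by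
        simp only [sum_apply, mul_apply, conjTranspose_apply, Finset.sum_mul, Finset.mul_sum]
        rw [Finset.sum_comm]
        refine Finset.sum_congr rfl fun b _ => ?_
        rw [Finset.sum_comm]
        refine Finset.sum_congr rfl fun a _ => Finset.sum_congr rfl fun k _ => ?_
        ring
    _ = ((r * X.trace) • (1 : Matrix m m R)) i j := by
        by_cases hij : i = j
        · simp [hcompl, hij, trace, Finset.mul_sum, mul_comm]
        · simp [hcompl, hij]

end Matrix

/-- Any `n²` pairwise Hilbert–Schmidt-orthogonal unitary matrices give a
mixed-unitary decomposition of the completely depolarizing channel `Ω_n`. -/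
theorem stmt_1 (n : ℕ) (hn : 0 < n)
    (U : Fin (n ^ 2) → Matrix (Fin n) (Fin n) ℂ)
    (hU : ∀ k, (U k)ᴴ * U k = 1 ∧ U k * (U k)ᴴ = 1)
    (horth : ∀ j k, j ≠ k → Matrix.trace ((U j)ᴴ * U k) = 0) :
    ∀ X : Matrix (Fin n) (Fin n) ℂ,
      (1 / (n ^ 2 : ℂ)) • ∑ k, U k * X * (U k)ᴴ = (Matrix.trace X / (n : ℂ)) • 1 := by
  intro X
  have hn0 : (n : ℂ) ≠ 0 := Nat.cast_ne_zero.mpr hn.ne'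
  have hMM : (vecCols U)ᴴ * vecCols U = (n : ℂ) • 1 := by
    simpa using conjTranspose_vecCols_mul_vecCols_of_unitary (fun k => (hU k).1) horth
  have hMM' : vecCols U * (vecCols U)ᴴ = (n : ℂ) • 1 :=
    mul_eq_smul_one_comm_of_card_eq hn0 (by simp [sq]) hMM
  rw [sum_mul_mul_conjTranspose_eq_smul_trace hMM', smul_smul]
  congr 1
  field_simp
end

section
/- Let G be a finite group, let d be a positive integer, and let ρ : G → U(d) be a group homomorphism into the group of d×d complex unitary matrices. Let N be the complex dimension of the linear span of {ρ(g) : g ∈ G} in M_d(ℂ). Suppose M is a positive integer, q_1, …, q_M are strictly positive reals with Σ_k q_k = 1, and V_1, …, V_M ∈ M_d(ℂ) are unitary matrices such that (1/|G|) Σ_{g ∈ G} ρ(g) X ρ(g)ᴴ = Σ_{k=1}^{M} q_k V_k X V_kᴴ for every X ∈ M_d(ℂ). Then M ≥ N. -/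
open Matrix BigOperators

/-!
For a Kraus representation `Φ X = ∑ a, c a • (A a * X * (A a)ᴴ)` and a linear functional `f`,
expanding `f` in the matrix units shows that `∑ a, c a * |f (A a)|²` is a sesquilinear
expression in the values `Φ (single j l 1)`; so it depends only on `Φ`. A functional vanishing
on every `V k` therefore kills `∑ g, |f (ρ g)|² / |G|`, hence every `f (ρ g)`. Thus the span of
`ρ(G)` lies in the span of the `V k`, which has dimension at most `M`.
-/

section KrausMap

variable {m n ι κ : Type*} [Fintype m] [Fintype n] [DecidableEq m] [DecidableEq n]
  [Fintype ι] [Fintype κ]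

noncomputable def krausMap (c : ι → ℝ) (A : ι → Matrix m n ℂ) (X : Matrix n n ℂ) :
    Matrix m m ℂ :=
  ∑ i, (c i : ℂ) • (A i * X * (A i)ᴴ)

omit [Fintype m] [DecidableEq m] in
lemma krausMap_single_apply (c : ι → ℝ) (A : ι → Matrix m n ℂ) (i k : m) (j l : n) :
    krausMap c A (single j l 1) i k = ∑ a, (c a : ℂ) * (A a i j * star (A a k l)) := by
  simp [krausMap, Matrix.sum_apply, Matrix.mul_apply, single, mul_ite, ite_mul, Finset.sum_ite_eq,
    ite_and]

lemma linearMap_apply_eq_sum_single (f : Matrix m n ℂ →ₗ[ℂ] ℂ) (A : Matrix m n ℂ) :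
    f A = ∑ p : m × n, A p.1 p.2 * f (single p.1 p.2 1) := by
  conv_lhs => rw [matrix_eq_sum_single A, ← Fintype.sum_prod_type']
  simp only [map_sum]
  refine Finset.sum_congr rfl fun p _ => ?_
  rw [← smul_eq_mul, ← map_smul, smul_single, smul_eq_mul, mul_one]

lemma sum_mul_star_eq_sum_krausMap (c : ι → ℝ) (A : ι → Matrix m n ℂ)
    (f : Matrix m n ℂ →ₗ[ℂ] ℂ) :
    ∑ a, (c a : ℂ) * (f (A a) * star (f (A a))) =
      ∑ p : m × n, ∑ q : m × n, f (single p.1 p.2 1) * star (f (single q.1 q.2 1)) *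
        krausMap c A (single p.2 q.2 1) p.1 q.1 := by
  have hf : ∀ a, f (A a) * star (f (A a)) = ∑ p : m × n, ∑ q : m × n,
      A a p.1 p.2 * f (single p.1 p.2 1) * star (A a q.1 q.2 * f (single q.1 q.2 1)) := by
    intro a
    rw [linearMap_apply_eq_sum_single f (A a), star_sum, Finset.sum_mul_sum]
  simp only [hf, Finset.mul_sum, krausMap_single_apply]
  rw [Finset.sum_comm]; refine Finset.sum_congr rfl fun p _ => ?_
  rw [Finset.sum_comm]; refine Finset.sum_congr rfl fun q _ => ?_
  refine Finset.sum_congr rfl fun a _ => ?_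
  rw [star_mul']
  ring

lemma sum_mul_normSq_eq_of_krausMap_eq {c : ι → ℝ} {A : ι → Matrix m n ℂ} {c' : κ → ℝ}
    {B : κ → Matrix m n ℂ} (h : krausMap c A = krausMap c' B) (f : Matrix m n ℂ →ₗ[ℂ] ℂ) :
    ∑ a, c a * Complex.normSq (f (A a)) = ∑ b, c' b * Complex.normSq (f (B b)) := by
  have hC := sum_mul_star_eq_sum_krausMap c A f
  rw [h, ← sum_mul_star_eq_sum_krausMap c' B f] at hC
  simp only [Complex.star_def, Complex.mul_conj] at hC
  exact_mod_cast hC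

lemma span_range_le_of_krausMap_eq {c : ι → ℝ} {A : ι → Matrix m n ℂ} {c' : κ → ℝ}
    {B : κ → Matrix m n ℂ} (hc : ∀ a, 0 < c a) (h : krausMap c A = krausMap c' B) :
    Submodule.span ℂ (Set.range A) ≤ Submodule.span ℂ (Set.range B) := by
  rw [Submodule.span_le]
  rintro _ ⟨a, rfl⟩
  by_contra hA
  obtain ⟨f, hfA, hfB⟩ := Submodule.exists_dual_map_eq_bot_of_notMem hA inferInstance
  have hB : ∀ b, f (B b) = 0 := fun b =>
    LinearMap.mem_ker.1 (LinearMap.le_ker_iff_map.2 hfB (Submodule.subset_span ⟨b, rfl⟩))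
  have hsum := sum_mul_normSq_eq_of_krausMap_eq h f
  simp only [hB, map_zero, mul_zero, Finset.sum_const_zero] at hsum
  have ha := (Finset.sum_eq_zero_iff_of_nonneg fun a _ =>
    mul_nonneg (hc a).le (Complex.normSq_nonneg _)).1 hsum a (Finset.mem_univ a)
  exact hfA (Complex.normSq_eq_zero.1 ((mul_eq_zero.1 ha).resolve_left (hc a).ne'))

end KrausMap

theorem stmt_5_general (G : Type*) [Group G] [Fintype G] (d : ℕ)
    (ρ : G →* Matrix.unitaryGroup (Fin d) ℂ)
    (N : ℕ)
    (hN : N = Module.finrank ℂ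
      ↥(Submodule.span ℂ (Set.range fun g : G => (ρ g : Matrix (Fin d) (Fin d) ℂ))))
    (M : ℕ)
    (q : Fin M → ℝ)
    (V : Fin M → Matrix (Fin d) (Fin d) ℂ)
    (hdec : ∀ X : Matrix (Fin d) (Fin d) ℂ,
      (1 / (Fintype.card G : ℂ)) •
          ∑ g : G, (ρ g : Matrix (Fin d) (Fin d) ℂ) * X * ((ρ g : Matrix (Fin d) (Fin d) ℂ))ᴴ =
        ∑ k, (q k : ℂ) • (V k * X * (V k)ᴴ)) :
    N ≤ M := by
  have htwirl : krausMap (fun _ => (Fintype.card G : ℝ)⁻¹) (fun g => (ρ g : Matrix _ _ ℂ)) =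
      krausMap q V := by
    funext X
    rw [krausMap, krausMap, ← hdec X, Finset.smul_sum]
    push_cast
    simp only [one_div]
  have hspan := span_range_le_of_krausMap_eq (fun _ => by positivity) htwirl
  calc N ≤ Module.finrank ℂ (Submodule.span ℂ (Set.range V)) := hN ▸ Submodule.finrank_mono hspan
    _ ≤ Fintype.card (Fin M) := finrank_range_le_card V
    _ = M := Fintype.card_fin M

/-- Any mixed-unitary decomposition (with strictly positive weights) of
the twirling channel of a unitary representation of a finite group uses at least `N`
unitaries, where `N` is the dimension of the span of the representation matrices. -/
theorem stmt_5 (G : Type*) [Group G] [Fintype G] (d : ℕ) (hd : 0 < d)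
    (ρ : G →* Matrix.unitaryGroup (Fin d) ℂ)
    (N : ℕ)
    (hN : N = Module.finrank ℂ
      ↥(Submodule.span ℂ (Set.range fun g : G => (ρ g : Matrix (Fin d) (Fin d) ℂ))))
    (M : ℕ) (hM : 0 < M)
    (q : Fin M → ℝ) (hq : ∀ k, 0 < q k) (hq1 : ∑ k, q k = 1)
    (V : Fin M → Matrix (Fin d) (Fin d) ℂ)
    (hV : ∀ k, (V k)ᴴ * V k = 1 ∧ V k * (V k)ᴴ = 1)
    (hdec : ∀ X : Matrix (Fin d) (Fin d) ℂ,
      (1 / (Fintype.card G : ℂ)) •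
          ∑ g : G, (ρ g : Matrix (Fin d) (Fin d) ℂ) * X * ((ρ g : Matrix (Fin d) (Fin d) ℂ))ᴴ =
        ∑ k, (q k : ℂ) • (V k * X * (V k)ᴴ)) :
    N ≤ M :=
  stmt_5_general G d ρ N hN M q V hdec
end

section
/- Let n and N be positive integers, let k and M be integers, and define the matrix U ∈ M_n(ℂ) by U(a,b) = (1/n) Σ_{c=1}^{n} exp(2πi·c(b−a)/n) · exp(2πi·k(M+(a−1)n+c)/N) for a, b ∈ {1,…,n}. Then U is unitary: U Uᴴ = Uᴴ U = 1_n. -/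
open Matrix BigOperators

/-! With `ζ = e^{2πi/n}`, `η = e^{2πi/N}` and the Fourier matrix `F(c,b) = ζ^{(c+1)b}`, the matrix
factors as `U = D · (1/n) Fᴴ E F`, where `D` and `E` are diagonal with entries powers of `η`, hence
unitary. Orthogonality of the `n`-th roots of unity gives `F Fᴴ = n·1`, so `F/√n` is unitary and
`U` is a product of unitaries. -/

open Complex
open scoped Real

theorem Unitary.star_eq_inv_of_mem {K : Type*} [GroupWithZero K] [StarMul K] {u : K}
    (hu : u ∈ unitary K) : star u = u⁻¹ :=
  eq_inv_of_mul_eq_one_left (Unitary.star_mul_self_of_mem hu)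

theorem Unitary.ne_zero_of_mem {K : Type*} [GroupWithZero K] [StarMul K] {u : K}
    (hu : u ∈ unitary K) : u ≠ 0 := by
  rintro rfl
  simpa using Unitary.star_mul_self_of_mem hu

theorem Unitary.zpow_mem {K : Type*} [GroupWithZero K] [StarMul K] {u : K}
    (hu : u ∈ unitary K) (z : ℤ) : u ^ z ∈ unitary K :=
  Unitary.coe_zpow ⟨u, hu⟩ z ▸ (⟨u, hu⟩ ^ z : unitary K).2

theorem Complex.exp_ofReal_mul_I_mem_unitary (x : ℝ) : exp (x * I) ∈ unitary ℂ := by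
  have h : star (exp (x * I)) = exp (-(x * I)) := by
    rw [star_def, ← exp_conj, map_mul, conj_ofReal, conj_I, mul_neg]
  rw [Unitary.mem_iff, h, ← exp_add, ← exp_add, neg_add_cancel, add_neg_cancel, exp_zero]
  exact ⟨rfl, rfl⟩

theorem Complex.exp_two_pi_I_div_mem_unitary (m : ℕ) : exp (2 * π * I / m) ∈ unitary ℂ := by
  convert exp_ofReal_mul_I_mem_unitary (2 * π / m) using 2
  push_cast
  ring

theorem IsPrimitiveRoot.sum_zpow_mul_eq_ite {K : Type*} [Field K] {ζ : K} {n : ℕ}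
    (hζ : IsPrimitiveRoot ζ n) (d : ℤ) :
    ∑ b : Fin n, ζ ^ (d * b) = if (n : ℤ) ∣ d then (n : K) else 0 := by
  have hpow (b : ℕ) : ζ ^ (d * b) = (ζ ^ d) ^ b := by rw [_root_.zpow_mul, zpow_natCast]
  simp only [hpow, Fin.sum_univ_eq_sum_range (fun b => (ζ ^ d) ^ b)]
  split_ifs with hd
  · simp [(hζ.zpow_eq_one_iff_dvd d).mpr hd]
  · have hne : ζ ^ d ≠ 1 := fun h => hd ((hζ.zpow_eq_one_iff_dvd d).mp h)
    rw [geom_sum_eq hne, ← zpow_natCast, ← _root_.zpow_mul, mul_comm, _root_.zpow_mul,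
      hζ.zpow_eq_one, _root_.one_zpow, sub_self, zero_div]

section UnitaryGroup

variable {m α : Type*} [Fintype m] [DecidableEq m]

theorem Matrix.diagonal_mem_unitaryGroup [CommRing α] [StarRing α] {d : m → α}
    (hd : ∀ i, d i ∈ unitary α) : diagonal d ∈ unitaryGroup m α := by
  rw [mem_unitaryGroup_iff, star_eq_conjTranspose, diagonal_conjTranspose,
    diagonal_mul_diagonal, ← diagonal_one]
  exact congrArg diagonal (funext fun i => Unitary.mul_star_self_of_mem (hd i))

theorem Matrix.inv_smul_conjTranspose_mul_mul_mem_unitaryGroup [Field α] [StarRing α]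
    {F E : Matrix m m α} {r : α} (hr : r ≠ 0) (hr_star : star r = r)
    (hF : F * Fᴴ = r • 1) (hE : E ∈ unitaryGroup m α) :
    r⁻¹ • (Fᴴ * E * F) ∈ unitaryGroup m α := by
  have hF' : Fᴴ * F = r • 1 := by
    have h : F * (r⁻¹ • Fᴴ) = 1 := by
      rw [Matrix.mul_smul, hF, smul_smul, inv_mul_cancel₀ hr, one_smul]
    rw [← inv_smul_eq_iff₀ hr, ← Matrix.smul_mul, mul_eq_one_comm.mp h]
  have hE' : E * Eᴴ = 1 := mem_unitaryGroup_iff.mp hE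
  rw [mem_unitaryGroup_iff, star_eq_conjTranspose, conjTranspose_smul, star_inv₀, hr_star]
  calc r⁻¹ • (Fᴴ * E * F) * r⁻¹ • (Fᴴ * E * F)ᴴ
      = (r⁻¹ * r⁻¹) • (Fᴴ * E * (F * Fᴴ) * Eᴴ * F) := by
        simp only [conjTranspose_mul, conjTranspose_conjTranspose, Matrix.smul_mul,
          Matrix.mul_smul, smul_smul, Matrix.mul_assoc]
    _ = r⁻¹ • (Fᴴ * F) := by
        rw [hF, Matrix.mul_smul, Matrix.mul_one, Matrix.smul_mul, Matrix.smul_mul,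
          Matrix.mul_assoc Fᴴ, hE', Matrix.mul_one, smul_smul, inv_mul_cancel_right₀ hr]
    _ = 1 := by rw [hF', smul_smul, inv_mul_cancel₀ hr, one_smul]

end UnitaryGroup

section BlockMatrix

variable {K : Type*} [Field K]

/-- The discrete Fourier matrix, with frequencies `c + 1 ∈ {1, …, n}` as in the paper. -/
def dftMatrix (ζ : K) (n : ℕ) : Matrix (Fin n) (Fin n) K :=
  of fun c b => ζ ^ (((c : ℤ) + 1) * b)

/-- `U(a,b)` with `ζ = e^{2πi/n}`, `η = e^{2πi/N}`, and all indices shifted down to start at `0`. -/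
def blockMatrix (ζ η : K) (n : ℕ) (k M : ℤ) : Matrix (Fin n) (Fin n) K :=
  of fun a b => (n : K)⁻¹ *
    ∑ c : Fin n, ζ ^ (((c : ℤ) + 1) * (b - a)) * η ^ (k * (M + a * n + (c + 1)))

variable [StarRing K]

theorem dftMatrix_mul_conjTranspose {ζ : K} {n : ℕ} (hζ : IsPrimitiveRoot ζ n)
    (hζ_mem : ζ ∈ unitary K) : dftMatrix ζ n * (dftMatrix ζ n)ᴴ = (n : K) • 1 := by
  ext c c'
  have hζ0 : ζ ≠ 0 := Unitary.ne_zero_of_mem hζ_mem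
  have hterm (b : Fin n) :
      dftMatrix ζ n c b * star (dftMatrix ζ n c' b) = ζ ^ (((c : ℤ) - c') * b) := by
    rw [dftMatrix, of_apply, of_apply, star_zpow₀, Unitary.star_eq_inv_of_mem hζ_mem,
      _root_.inv_zpow', ← zpow_add₀ hζ0]
    ring_nf
  have hdvd : (n : ℤ) ∣ (c : ℤ) - c' ↔ c = c' := by
    refine ⟨fun h => Fin.ext ?_, fun h => by simp [h]⟩
    have := Int.eq_zero_of_abs_lt_dvd h (by rw [abs_lt]; omega)
    omega
  simp only [mul_apply, conjTranspose_apply, hterm, hζ.sum_zpow_mul_eq_ite, hdvd,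
    Matrix.smul_apply, one_apply, smul_eq_mul]
  simp

theorem blockMatrix_eq {ζ η : K} (hζ : ζ ∈ unitary K) (hη : η ≠ 0) (n : ℕ) (k M : ℤ) :
    blockMatrix ζ η n k M = diagonal (fun a : Fin n => η ^ (k * (M + a * n))) *
      ((n : K)⁻¹ • ((dftMatrix ζ n)ᴴ * diagonal (fun c : Fin n => η ^ (k * ((c : ℤ) + 1))) *
        dftMatrix ζ n)) := by
  ext a b
  rw [diagonal_mul, Matrix.smul_apply, mul_apply, smul_eq_mul, blockMatrix, of_apply,
    Finset.mul_sum, Finset.mul_sum, Finset.mul_sum]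
  simp only [mul_diagonal, conjTranspose_apply, dftMatrix, of_apply, star_zpow₀,
    Unitary.star_eq_inv_of_mem hζ, _root_.inv_zpow']
  refine Finset.sum_congr rfl fun c _ => ?_
  rw [show ((c : ℤ) + 1) * (b - a) = -(((c : ℤ) + 1) * a) + ((c : ℤ) + 1) * b by ring,
    show k * (M + a * n + (c + 1)) = k * (M + a * n) + k * (c + 1) by ring,
    zpow_add₀ (Unitary.ne_zero_of_mem hζ), zpow_add₀ hη]
  ring

theorem blockMatrix_mem_unitaryGroup [CharZero K] {ζ η : K} {n : ℕ} (hn : n ≠ 0)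
    (hζ : IsPrimitiveRoot ζ n) (hζ_mem : ζ ∈ unitary K) (hη_mem : η ∈ unitary K) (k M : ℤ) :
    blockMatrix ζ η n k M ∈ unitaryGroup (Fin n) K := by
  rw [blockMatrix_eq hζ_mem (Unitary.ne_zero_of_mem hη_mem)]
  refine mul_mem (diagonal_mem_unitaryGroup fun _ => Unitary.zpow_mem hη_mem _) ?_
  exact inv_smul_conjTranspose_mul_mul_mem_unitaryGroup (Nat.cast_ne_zero.mpr hn)
    (star_natCast n) (dftMatrix_mul_conjTranspose hζ hζ_mem)
    (diagonal_mem_unitaryGroup fun _ => Unitary.zpow_mem hη_mem _)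

end BlockMatrix

theorem stmt_8_general (n N : ℕ) (hn : 0 < n) (k M : ℤ)
    (U : Matrix (Fin n) (Fin n) ℂ)
    (hU : ∀ a b : Fin n, U a b = (1 / (n : ℂ)) *
      ∑ c : Fin n,
        Complex.exp (2 * (Real.pi : ℂ) * Complex.I *
            (((c.val : ℂ) + 1) * ((b.val : ℂ) - (a.val : ℂ))) / (n : ℂ)) *
        Complex.exp (2 * (Real.pi : ℂ) * Complex.I * (k : ℂ) *
            ((M : ℂ) + (a.val : ℂ) * (n : ℂ) + ((c.val : ℂ) + 1)) / (N : ℂ))) :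
    U * Uᴴ = 1 ∧ Uᴴ * U = 1 := by
  have hU_eq : U = blockMatrix (exp (2 * π * I / n)) (exp (2 * π * I / N)) n k M := by
    ext a b
    rw [hU, blockMatrix, of_apply, one_div]
    congr 1
    refine Finset.sum_congr rfl fun c _ => ?_
    rw [← exp_int_mul, ← exp_int_mul]
    congr 2 <;> push_cast <;> ring
  have hmem := hU_eq ▸ blockMatrix_mem_unitaryGroup hn.ne' (isPrimitiveRoot_exp n hn.ne')
    (exp_two_pi_I_div_mem_unitary n) (exp_two_pi_I_div_mem_unitary N) k M
  exact ⟨mem_unitaryGroup_iff.mp hmem, mem_unitaryGroup_iff'.mp hmem⟩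

/-- The building-block matrix
`U(a,b) = (1/n) Σ_{c=1}^n exp(2πi·c(b−a)/n)·exp(2πi·k(M+(a−1)n+c)/N)`
(for `a,b ∈ {1,…,n}`) is unitary. -/
theorem stmt_8 (n N : ℕ) (hn : 0 < n) (hN : 0 < N) (k M : ℤ)
    (U : Matrix (Fin n) (Fin n) ℂ)
    (hU : ∀ a b : Fin n, U a b = (1 / (n : ℂ)) *
      ∑ c : Fin n,
        Complex.exp (2 * (Real.pi : ℂ) * Complex.I *
            (((c.val : ℂ) + 1) * ((b.val : ℂ) - (a.val : ℂ))) / (n : ℂ)) *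
        Complex.exp (2 * (Real.pi : ℂ) * Complex.I * (k : ℂ) *
            ((M : ℂ) + (a.val : ℂ) * (n : ℂ) + ((c.val : ℂ) + 1)) / (N : ℂ))) :
    U * Uᴴ = 1 ∧ Uᴴ * U = 1 :=
  stmt_8_general n N hn k M U hU
end

section
/- Let n and N be positive integers with N ≥ n², and let M be an integer. For each k ∈ {1,…,N} define U_k ∈ M_n(ℂ) by U_k(a,b) = (1/n) Σ_{c=1}^{n} exp(2πi·c(b−a)/n) · exp(2πi·k(M+(a−1)n+c)/N) for a, b ∈ {1,…,n}. Then for every X ∈ M_n(ℂ), (1/N) Σ_{k=1}^{N} U_k X U_kᴴ = (Tr X / n)·1_n. -/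
/-!
Put `j(a, c) = M + a n + c + 1`. The entry `U_k(a, b)` is a combination, with coefficients
`n⁻¹ ω^{(c+1)(b-a)}`, of the characters `k ↦ η^{(k+1) j(a, c)}` of `ZMod N`. Since `n² ≤ N`, distinct
pairs `(a, c)` give distinct residues `j(a, c) mod N`, so these characters are orthogonal, and the
orthogonality `∑_c ω^{(c+1)(p-q)} = n δ_{pq}` then gives
`∑_k U_k(a, p) conj U_k(b, q) = (N / n) δ_{ab} δ_{pq}`.
Any family of matrices with this Gram relation averages `X` to a multiple of `tr X • 1`.
-/

open Matrix

namespace IsPrimitiveRoot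

theorem sum_zpow_succ_mul {K : Type*} [Field K] {ζ : K} {N : ℕ} (h : IsPrimitiveRoot ζ N)
    (t : ℤ) : ∑ k : Fin N, ζ ^ (((k : ℤ) + 1) * t) = if (N : ℤ) ∣ t then (N : K) else 0 := by
  have hpow : ∀ k : Fin N, ζ ^ (((k : ℤ) + 1) * t) = (ζ ^ t) ^ ((k : ℕ) + 1) := fun k => by
    rw [mul_comm, _root_.zpow_mul]
    norm_cast
  simp only [hpow]
  split_ifs with ht
  · simp [(h.zpow_eq_one_iff_dvd t).2 ht]
  · have hne : ζ ^ t ≠ 1 := mt (h.zpow_eq_one_iff_dvd t).1 ht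
    have hroot : (ζ ^ t) ^ N = 1 := by
      rw [← zpow_natCast, ← _root_.zpow_mul, mul_comm, _root_.zpow_mul, zpow_natCast,
        h.pow_eq_one, _root_.one_zpow]
    rw [Fin.sum_univ_eq_sum_range (fun k => (ζ ^ t) ^ (k + 1))]
    simp only [pow_succ, ← Finset.sum_mul, geom_sum_eq hne, hroot, sub_self, zero_div, zero_mul]

theorem star_zpow_eq_zpow_neg {ζ : ℂ} {n : ℕ} (h : IsPrimitiveRoot ζ n) (hn : n ≠ 0) (t : ℤ) :
    star (ζ ^ t) = ζ ^ (-t) := by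
  rw [star_zpow₀, _root_.zpow_neg, ← _root_.inv_zpow, Complex.inv_eq_conj (h.norm'_eq_one hn)]
  rfl

end IsPrimitiveRoot

theorem Fin.natCast_dvd_add_mul_sub_add_mul_iff {n N : ℕ} (hN : n * n ≤ N) (a b c d : Fin n) :
    (N : ℤ) ∣ ((c : ℤ) + n * a) - ((d : ℤ) + n * b) ↔ a = b ∧ c = d := by
  refine ⟨fun h => ?_, by rintro ⟨rfl, rfl⟩; simp⟩
  have hmod : (finProdFinEquiv (b, d) : ℕ) ≡ finProdFinEquiv (a, c) [MOD N] :=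
    Nat.modEq_iff_dvd.2 (by push_cast [finProdFinEquiv_apply_val]; exact h)
  have hval := hmod.eq_of_lt_of_lt ((Fin.isLt _).trans_le hN) ((Fin.isLt _).trans_le hN)
  simpa [eq_comm] using finProdFinEquiv.injective (Fin.ext hval)

theorem Fin.natCast_dvd_sub_iff {n : ℕ} (p q : Fin n) : (n : ℤ) ∣ (p : ℤ) - q ↔ p = q := by
  refine ⟨fun h => Fin.ext ((Nat.modEq_iff_dvd.2 h).eq_of_lt_of_lt q.isLt p.isLt).symm, ?_⟩
  rintro rfl
  simp

theorem Matrix.sum_mul_mul_conjTranspose_eq_smul_one {m κ R : Type*} [Fintype m] [DecidableEq m]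
    [Fintype κ] [CommSemiring R] [StarRing R] (U : κ → Matrix m m R) (r : R)
    (hU : ∀ a b p q, ∑ k, U k a p * star (U k b q) = if a = b ∧ p = q then r else 0)
    (X : Matrix m m R) : ∑ k, U k * X * (U k)ᴴ = (r * trace X) • 1 := by
  ext a b
  calc (∑ k, U k * X * (U k)ᴴ) a b = ∑ q, ∑ p, X p q * ∑ k, U k a p * star (U k b q) := by
        simp only [Matrix.sum_apply, mul_apply, conjTranspose_apply, Finset.sum_mul, Finset.mul_sum]
        rw [Finset.sum_comm]
        refine Finset.sum_congr rfl fun q _ => ?_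
        rw [Finset.sum_comm]
        exact Finset.sum_congr rfl fun p _ => Finset.sum_congr rfl fun k _ => by ring
    _ = ((r * trace X) • (1 : Matrix m m R)) a b := by
        simp only [hU]
        by_cases hab : a = b
        · simp [hab, trace, Finset.mul_sum, mul_comm]
        · simp [hab]

/-- Indices are `0`-based: `k + 1`, `a + 1`, `c + 1` are the paper's `k`, `a`, `c`, and `ω`, `η`
stand for `exp (2πi/n)`, `exp (2πi/N)`. -/
noncomputable def depolarizingUnitary (n N : ℕ) (ω η : ℂ) (M : ℤ) (k : Fin N) :
    Matrix (Fin n) (Fin n) ℂ :=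
  Matrix.of fun a b => (n : ℂ)⁻¹ * ∑ c : Fin n,
    ω ^ (((c : ℤ) + 1) * ((b : ℤ) - a)) * η ^ (((k : ℤ) + 1) * (M + a * n + ((c : ℤ) + 1)))

theorem sum_depolarizingUnitary_mul_star {n N : ℕ} {ω η : ℂ} (hω : IsPrimitiveRoot ω n)
    (hη : IsPrimitiveRoot η N) (hN : n * n ≤ N) (M : ℤ) (a b p q : Fin n) :
    ∑ k, depolarizingUnitary n N ω η M k a p * star (depolarizingUnitary n N ω η M k b q) =
      if a = b ∧ p = q then (N : ℂ) / n else 0 := by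
  have hn : n ≠ 0 := a.pos.ne'
  have hN0 : N ≠ 0 := ((Nat.mul_pos a.pos a.pos).trans_le hN).ne'
  have hprod : ∀ k : Fin N,
      depolarizingUnitary n N ω η M k a p * star (depolarizingUnitary n N ω η M k b q) =
        (n : ℂ)⁻¹ ^ 2 * ∑ c : Fin n, ∑ d : Fin n,
          ω ^ (((c : ℤ) + 1) * ((p : ℤ) - a) - ((d : ℤ) + 1) * ((q : ℤ) - b)) *
            η ^ (((k : ℤ) + 1) * (((c : ℤ) + n * a) - ((d : ℤ) + n * b))) := fun k => by
    simp only [depolarizingUnitary, of_apply, star_mul', star_sum, star_inv₀, star_natCast]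
    rw [mul_mul_mul_comm, ← sq, Finset.sum_mul_sum]
    congr 1
    refine Finset.sum_congr rfl fun c _ => Finset.sum_congr rfl fun d _ => ?_
    rw [hω.star_zpow_eq_zpow_neg hn, hη.star_zpow_eq_zpow_neg hN0, zpow_sub₀ (hω.ne_zero hn),
      show ((k : ℤ) + 1) * (((c : ℤ) + n * a) - ((d : ℤ) + n * b)) =
        ((k : ℤ) + 1) * (M + a * n + ((c : ℤ) + 1)) +
          -(((k : ℤ) + 1) * (M + b * n + ((d : ℤ) + 1))) by ring,
      zpow_add₀ (hη.ne_zero hN0), _root_.zpow_neg, _root_.zpow_neg]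
    ring
  calc ∑ k, depolarizingUnitary n N ω η M k a p * star (depolarizingUnitary n N ω η M k b q)
      = (n : ℂ)⁻¹ ^ 2 * ∑ c : Fin n, ∑ d : Fin n,
          ω ^ (((c : ℤ) + 1) * ((p : ℤ) - a) - ((d : ℤ) + 1) * ((q : ℤ) - b)) *
            ∑ k : Fin N, η ^ (((k : ℤ) + 1) * (((c : ℤ) + n * a) - ((d : ℤ) + n * b))) := by
        rw [Finset.sum_congr rfl fun k _ => hprod k, ← Finset.mul_sum, ← Finset.sum_comm_cycle]
        simp only [Finset.mul_sum]
    _ = (n : ℂ)⁻¹ ^ 2 * ∑ c : Fin n, ∑ d : Fin n,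
          ω ^ (((c : ℤ) + 1) * ((p : ℤ) - a) - ((d : ℤ) + 1) * ((q : ℤ) - b)) *
            if a = b ∧ c = d then (N : ℂ) else 0 := by
        simp only [hη.sum_zpow_succ_mul, Fin.natCast_dvd_add_mul_sub_add_mul_iff hN]
    _ = if a = b ∧ p = q then (N : ℂ) / n else 0 := by
        by_cases hab : a = b
        · subst hab
          have hdiag : ∀ c : Fin n, ((c : ℤ) + 1) * ((p : ℤ) - a) - ((c : ℤ) + 1) * ((q : ℤ) - a)
              = ((c : ℤ) + 1) * ((p : ℤ) - q) := fun c => by ring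
          simp only [true_and, mul_ite, mul_zero, Finset.sum_ite_eq, Finset.mem_univ, if_true,
            hdiag, ← Finset.sum_mul, hω.sum_zpow_succ_mul, Fin.natCast_dvd_sub_iff]
          split_ifs
          · field_simp
          · simp
        · simp [hab]

/-- For `N ≥ n²`, the `N` matrices
`U_k(a,b) = (1/n) Σ_{c=1}^n exp(2πi·c(b−a)/n)·exp(2πi·k(M+(a−1)n+c)/N)`,
`k ∈ {1,…,N}`, give a mixed-unitary decomposition of the completely depolarizing
channel `Ω_n`. -/
theorem stmt_9 (n N : ℕ) (hn : 0 < n) (hN : n ^ 2 ≤ N) (M : ℤ)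
    (U : Fin N → Matrix (Fin n) (Fin n) ℂ)
    (hU : ∀ (k : Fin N) (a b : Fin n), U k a b = (1 / (n : ℂ)) *
      ∑ c : Fin n,
        Complex.exp (2 * (Real.pi : ℂ) * Complex.I *
            (((c.val : ℂ) + 1) * ((b.val : ℂ) - (a.val : ℂ))) / (n : ℂ)) *
        Complex.exp (2 * (Real.pi : ℂ) * Complex.I * ((k.val : ℂ) + 1) *
            ((M : ℂ) + (a.val : ℂ) * (n : ℂ) + ((c.val : ℂ) + 1)) / (N : ℂ))) :
    ∀ X : Matrix (Fin n) (Fin n) ℂ,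
      (1 / (N : ℂ)) • ∑ k, U k * X * (U k)ᴴ = (Matrix.trace X / (n : ℂ)) • 1 := by
  intro X
  have hN0 : N ≠ 0 := ((pow_pos hn 2).trans_le hN).ne'
  have hU_eq : U = depolarizingUnitary n N (Complex.exp (2 * Real.pi * Complex.I / n))
      (Complex.exp (2 * Real.pi * Complex.I / N)) M := by
    funext k
    ext a b
    rw [hU, depolarizingUnitary, of_apply, one_div]
    refine congrArg _ (Finset.sum_congr rfl fun c _ => ?_)
    rw [← Complex.exp_int_mul, ← Complex.exp_int_mul]
    congr 2 <;> push_cast <;> ring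
  have hGram := sum_depolarizingUnitary_mul_star (Complex.isPrimitiveRoot_exp n hn.ne')
    (Complex.isPrimitiveRoot_exp N hN0) (sq n ▸ hN) M
  rw [hU_eq, sum_mul_mul_conjTranspose_eq_smul_one _ _ hGram, smul_smul]
  congr 1
  field_simp
end

section
/- Let n, n', N be positive integers and let M, M' be integers. For each k ∈ {1,…,N} define U_k ∈ M_n(ℂ) by U_k(a,b) = (1/n) Σ_{c=1}^{n} exp(2πi·c(b−a)/n) · exp(2πi·k(M+(a−1)n+c)/N), and define U'_k ∈ M_{n'}(ℂ) by U'_k(a',b') = (1/n') Σ_{c'=1}^{n'} exp(2πi·c'(b'−a')/n') · exp(2πi·k(M'+(a'−1)n'+c')/N). Suppose that for all a, c ∈ {1,…,n} and all a', c' ∈ {1,…,n'} one has M+(a−1)n+c ≢ M'+(a'−1)n'+c' (mod N). Then Σ_{k=1}^{N} U_k X (U'_k)ᴴ = 0 for every X ∈ M_{n,n'}(ℂ). -/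
open Matrix Complex Real

/-! Each entry of `U k * X * (U' k)ᴴ` is a combination, with coefficients independent of `k`,
of products `ζₖ ^ e * conj (ζₖ ^ e')` with `ζₖ = exp (2πi(k+1)/N)`, where `e`, `e'` run over
the exponents of the two blocks. Summed over `k`, such a product is a full geometric sum of the
`N`-th root of unity `exp (2πi(e - e')/N)`, which is nontrivial because `e ≢ e' (mod N)`,
hence vanishes. -/

theorem Matrix.sum_mul_mul_conjTranspose_eq_zero_of_orthogonal {ι m l m' l' γ γ' R : Type*}
    [Fintype ι] [Fintype l] [Fintype l'] [Fintype γ] [Fintype γ'] [CommSemiring R] [StarRing R]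
    (U : ι → Matrix m l R) (U' : ι → Matrix m' l' R)
    (A : m → l → γ → R) (f : ι → m → γ → R)
    (B : m' → l' → γ' → R) (g : ι → m' → γ' → R)
    (hU : ∀ k a b, U k a b = ∑ c, A a b c * f k a c)
    (hU' : ∀ k a b, U' k a b = ∑ c, B a b c * g k a c)
    (horth : ∀ a c a' c', ∑ k, f k a c * star (g k a' c') = 0) (X : Matrix l l' R) :
    ∑ k, U k * X * (U' k)ᴴ = 0 := by
  ext a a'
  have hsum : ∀ b b' c c',
      ∑ k, A a b c * f k a c * X b b' * (star (B a' b' c') * star (g k a' c')) = 0 := by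
    intro b b' c c'
    calc _ = A a b c * X b b' * star (B a' b' c') * ∑ k, f k a c * star (g k a' c') := by
          rw [Finset.mul_sum]
          exact Fintype.sum_congr _ _ fun k => by ring
      _ = 0 := by rw [horth, mul_zero]
  simp only [sum_apply, mul_apply, conjTranspose_apply, hU, hU', star_sum, star_mul',
    Finset.sum_mul, Finset.mul_sum, zero_apply]
  rw [Finset.sum_comm]
  refine Finset.sum_eq_zero fun b' _ => ?_
  rw [Finset.sum_comm]
  refine Finset.sum_eq_zero fun c' _ => ?_
  rw [Finset.sum_comm]
  refine Finset.sum_eq_zero fun b _ => ?_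
  rw [Finset.sum_comm]
  exact Finset.sum_eq_zero fun c _ => hsum b b' c c'

lemma sum_exp_two_pi_I_succ_mul_div_eq_zero {N : ℕ} {d : ℤ} (hd : ¬ (N : ℤ) ∣ d) :
    ∑ k : Fin N, cexp (2 * π * I * ((k : ℂ) + 1) * d / N) = 0 := by
  obtain rfl | hN := N.eq_zero_or_pos
  · simp
  have hN0 : (N : ℂ) ≠ 0 := Nat.cast_ne_zero.2 hN.ne'
  set ω := cexp (2 * π * I * d / N)
  have hωN : ω ^ N = 1 := by
    rw [← Complex.exp_nat_mul, mul_div_cancel₀ _ hN0, mul_comm, exp_int_mul_two_pi_mul_I]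
  have hω1 : ω ≠ 1 := by
    rintro hω
    obtain ⟨m, hm⟩ := exp_eq_one_iff.1 hω
    refine hd ⟨m, ?_⟩
    have hdm : (d : ℂ) = N * m := by
      field_simp at hm
      exact hm
    exact_mod_cast hdm
  have hpow : ∀ k : Fin N, cexp (2 * π * I * ((k : ℂ) + 1) * d / N) = ω * ω ^ (k : ℕ) := by
    intro k
    rw [← pow_succ', ← Complex.exp_nat_mul]
    congr 1
    push_cast
    ring
  rw [Fintype.sum_congr _ _ hpow, ← Finset.mul_sum, Fin.sum_univ_eq_sum_range (ω ^ ·),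
    geom_sum_eq hω1, hωN, sub_self, zero_div, mul_zero]

lemma sum_exp_mul_star_exp_eq_zero_of_not_modEq {N : ℕ} {x y : ℤ} (h : ¬ x ≡ y [ZMOD N]) :
    ∑ k : Fin N, cexp (2 * π * I * ((k : ℂ) + 1) * x / N) *
      star (cexp (2 * π * I * ((k : ℂ) + 1) * y / N)) = 0 := by
  have hprod : ∀ k : Fin N, cexp (2 * π * I * ((k : ℂ) + 1) * x / N) *
      star (cexp (2 * π * I * ((k : ℂ) + 1) * y / N)) =
        cexp (2 * π * I * ((k : ℂ) + 1) * ((x - y : ℤ) : ℂ) / N) := by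
    intro k
    rw [Complex.star_def, ← exp_conj, ← Complex.exp_add]
    congr 1
    simp only [map_div₀, map_mul, map_add, map_one, map_ofNat, map_natCast, map_intCast,
      conj_ofReal, conj_I]
    push_cast
    ring
  rw [Fintype.sum_congr _ _ hprod]
  exact sum_exp_two_pi_I_succ_mul_div_eq_zero fun hdvd => h (Int.modEq_iff_dvd.2 hdvd).symm

theorem stmt_10_general (n n' N : ℕ) (M M' : ℤ)
    (U : Fin N → Matrix (Fin n) (Fin n) ℂ)
    (hU : ∀ (k : Fin N) (a b : Fin n), U k a b = (1 / (n : ℂ)) *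
      ∑ c : Fin n,
        Complex.exp (2 * (Real.pi : ℂ) * Complex.I *
            (((c.val : ℂ) + 1) * ((b.val : ℂ) - (a.val : ℂ))) / (n : ℂ)) *
        Complex.exp (2 * (Real.pi : ℂ) * Complex.I * ((k.val : ℂ) + 1) *
            ((M : ℂ) + (a.val : ℂ) * (n : ℂ) + ((c.val : ℂ) + 1)) / (N : ℂ)))
    (U' : Fin N → Matrix (Fin n') (Fin n') ℂ)
    (hU' : ∀ (k : Fin N) (a' b' : Fin n'), U' k a' b' = (1 / (n' : ℂ)) *
      ∑ c' : Fin n',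
        Complex.exp (2 * (Real.pi : ℂ) * Complex.I *
            (((c'.val : ℂ) + 1) * ((b'.val : ℂ) - (a'.val : ℂ))) / (n' : ℂ)) *
        Complex.exp (2 * (Real.pi : ℂ) * Complex.I * ((k.val : ℂ) + 1) *
            ((M' : ℂ) + (a'.val : ℂ) * (n' : ℂ) + ((c'.val : ℂ) + 1)) / (N : ℂ)))
    (hdisj : ∀ (a c : Fin n) (a' c' : Fin n'),
      ¬ (M + (a.val : ℤ) * (n : ℤ) + ((c.val : ℤ) + 1) ≡
          M' + (a'.val : ℤ) * (n' : ℤ) + ((c'.val : ℤ) + 1) [ZMOD (N : ℤ)])) :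
    ∀ X : Matrix (Fin n) (Fin n') ℂ, ∑ k, U k * X * (U' k)ᴴ = 0 := by
  intro X
  refine Matrix.sum_mul_mul_conjTranspose_eq_zero_of_orthogonal U U'
    (fun (a b c : Fin n) => 1 / n * cexp (2 * π * I * (((c : ℂ) + 1) * ((b : ℂ) - a)) / n))
    (fun (k : Fin N) (a c : Fin n) =>
      cexp (2 * π * I * ((k : ℂ) + 1) * ((M : ℂ) + a * n + ((c : ℂ) + 1)) / N))
    (fun (a' b' c' : Fin n') =>
      1 / n' * cexp (2 * π * I * (((c' : ℂ) + 1) * ((b' : ℂ) - a')) / n'))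
    (fun (k : Fin N) (a' c' : Fin n') =>
      cexp (2 * π * I * ((k : ℂ) + 1) * ((M' : ℂ) + a' * n' + ((c' : ℂ) + 1)) / N))
    (fun k a b => ?_) (fun k a' b' => ?_) (fun a c a' c' => ?_) X
  · rw [hU, Finset.mul_sum]
    simp only [mul_assoc]
  · rw [hU', Finset.mul_sum]
    simp only [mul_assoc]
  · simpa using sum_exp_mul_star_exp_eq_zero_of_not_modEq (hdisj a c a' c')

/-- Cross-block vanishing lemma: if the exponents of the two families
`U_k` and `U'_k` occupy disjoint residue classes modulo `N`, then
`Σ_{k=1}^N U_k X (U'_k)ᴴ = 0`. -/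
theorem stmt_10 (n n' N : ℕ) (hn : 0 < n) (hn' : 0 < n') (hN : 0 < N) (M M' : ℤ)
    (U : Fin N → Matrix (Fin n) (Fin n) ℂ)
    (hU : ∀ (k : Fin N) (a b : Fin n), U k a b = (1 / (n : ℂ)) *
      ∑ c : Fin n,
        Complex.exp (2 * (Real.pi : ℂ) * Complex.I *
            (((c.val : ℂ) + 1) * ((b.val : ℂ) - (a.val : ℂ))) / (n : ℂ)) *
        Complex.exp (2 * (Real.pi : ℂ) * Complex.I * ((k.val : ℂ) + 1) *
            ((M : ℂ) + (a.val : ℂ) * (n : ℂ) + ((c.val : ℂ) + 1)) / (N : ℂ)))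
    (U' : Fin N → Matrix (Fin n') (Fin n') ℂ)
    (hU' : ∀ (k : Fin N) (a' b' : Fin n'), U' k a' b' = (1 / (n' : ℂ)) *
      ∑ c' : Fin n',
        Complex.exp (2 * (Real.pi : ℂ) * Complex.I *
            (((c'.val : ℂ) + 1) * ((b'.val : ℂ) - (a'.val : ℂ))) / (n' : ℂ)) *
        Complex.exp (2 * (Real.pi : ℂ) * Complex.I * ((k.val : ℂ) + 1) *
            ((M' : ℂ) + (a'.val : ℂ) * (n' : ℂ) + ((c'.val : ℂ) + 1)) / (N : ℂ)))
    (hdisj : ∀ (a c : Fin n) (a' c' : Fin n'),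
      ¬ (M + (a.val : ℤ) * (n : ℤ) + ((c.val : ℤ) + 1) ≡
          M' + (a'.val : ℤ) * (n' : ℤ) + ((c'.val : ℤ) + 1) [ZMOD (N : ℤ)])) :
    ∀ X : Matrix (Fin n) (Fin n') ℂ, ∑ k, U k * X * (U' k)ᴴ = 0 :=
  stmt_10_general n n' N M M' U hU U' hU' hdisj
end

section
/- Let p be a positive integer, let m_1, …, m_p and n_1, …, n_p be positive integers, set d = m_1 n_1 + ⋯ + m_p n_p and N = n_1² + ⋯ + n_p². Index ℂ^d by triples (ℓ, a, b) with ℓ ∈ {1,…,p}, a ∈ {1,…,m_ℓ}, b ∈ {1,…,n_ℓ}, and define Φ : M_d(ℂ) → M_d(ℂ) by Φ(X)((ℓ,a,b),(ℓ',a',b')) = δ_{ℓ,ℓ'}·δ_{b,b'}·(1/n_ℓ)·Σ_{c=1}^{n_ℓ} X((ℓ,a,c),(ℓ,a',c)). Suppose M is a positive integer, q_1, …, q_M are strictly positive reals with Σ_k q_k = 1, and V_1, …, V_M ∈ M_d(ℂ) are unitary matrices such that Φ(X) = Σ_{k=1}^{M} q_k V_k X V_kᴴ for every X ∈ M_d(ℂ).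 Then M ≥ N. -/
open Matrix BigOperators

/-!
If `Φ X = ∑ₖ Aₖ X Bₖ`, then every column of the Choi matrix of `Φ`, reshaped as a matrix, is a
linear combination of the `Aₖ`, so the number of terms is at least the Choi rank of `Φ`.
For the block depolarizing channel, the `N` columns indexed by the pairs `((ℓ,0,β'), (ℓ,0,β))`
are linearly independent: their entries at the positions `((ℓ,0,β), (ℓ,0,β'))` form a diagonal
matrix with entries `1/nₗ`.
-/

namespace Matrix

variable {n ι R : Type*} [Fintype n] [DecidableEq n] [Fintype ι] [CommSemiring R]

/-- Column `(b, a)` of the Choi matrix `∑ᵢⱼ Eᵢⱼ ⊗ Φ(Eᵢⱼ)`, reshaped as an `n × n` matrix. -/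
def choiColumn (Φ : Matrix n n R → Matrix n n R) (b a : n) : Matrix n n R :=
  of fun j i => Φ (single i b 1) j a

lemma choiColumn_eq_sum {Φ : Matrix n n R → Matrix n n R} {A B : ι → Matrix n n R}
    (hΦ : ∀ X, Φ X = ∑ k, A k * X * B k) (b a : n) :
    choiColumn Φ b a = ∑ k, B k b a • A k := by
  ext j i
  simp [choiColumn, hΦ, Matrix.sum_apply, mul_apply, single_apply, ite_and, mul_comm]

lemma choiColumn_mem_span {Φ : Matrix n n R → Matrix n n R} {A B : ι → Matrix n n R}
    (hΦ : ∀ X, Φ X = ∑ k, A k * X * B k) (b a : n) :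
    choiColumn Φ b a ∈ Submodule.span R (Set.range A) := by
  rw [choiColumn_eq_sum hΦ]
  exact Submodule.sum_mem _ fun k _ => Submodule.smul_mem _ _ (Submodule.subset_span ⟨k, rfl⟩)

end Matrix

theorem LinearIndependent.card_le_card_of_forall_mem_span {K V ι τ : Type*} [DivisionRing K]
    [AddCommGroup V] [Module K V] [Fintype ι] [Fintype τ] {v : τ → V} {w : ι → V}
    (hv : LinearIndependent K v) (hvw : ∀ t, v t ∈ Submodule.span K (Set.range w)) :
    Fintype.card τ ≤ Fintype.card ι := by
  have := Module.Finite.span_of_finite K (Set.finite_range w)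
  calc Fintype.card τ = Module.finrank K (Submodule.span K (Set.range v)) :=
        (finrank_span_eq_card hv).symm
    _ ≤ Module.finrank K (Submodule.span K (Set.range w)) :=
        Submodule.finrank_mono (Submodule.span_le.2 (Set.range_subset_iff.2 hvw))
    _ ≤ Fintype.card ι := finrank_range_le_card w

namespace BlockDepolarizing

variable {p : ℕ} {m nn : Fin p → ℕ}
    {Φ : Matrix ((ℓ : Fin p) × (Fin (m ℓ) × Fin (nn ℓ))) ((ℓ : Fin p) × (Fin (m ℓ) × Fin (nn ℓ))) ℂ →
         Matrix ((ℓ : Fin p) × (Fin (m ℓ) × Fin (nn ℓ))) ((ℓ : Fin p) × (Fin (m ℓ) × Fin (nn ℓ))) ℂ}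
    (hΦ : ∀ X (i i' : (ℓ : Fin p) × (Fin (m ℓ) × Fin (nn ℓ))),
      Φ X i i' =
        if h : i.1 = i'.1 then
          (if Fin.cast (congrArg nn h) i.2.2 = i'.2.2 then
            (1 / (nn i'.1 : ℂ)) *
              ∑ c : Fin (nn i'.1),
                X ⟨i'.1, (Fin.cast (congrArg m h) i.2.1, c)⟩ ⟨i'.1, (i'.2.1, c)⟩
          else 0)
        else 0)
include hΦ

lemma apply_single_eq_ite {ℓ ℓ' : Fin p} (a : Fin (m ℓ)) (a' : Fin (m ℓ'))
    (β β' : Fin (nn ℓ)) (γ γ' : Fin (nn ℓ')) :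
    Φ (single ⟨ℓ, (a, β')⟩ ⟨ℓ', (a', γ')⟩ 1) ⟨ℓ, (a, β)⟩ ⟨ℓ', (a', γ)⟩ =
      if (⟨ℓ, (β, β')⟩ : (ℓ : Fin p) × (Fin (nn ℓ) × Fin (nn ℓ))) = ⟨ℓ', (γ, γ')⟩
      then 1 / (nn ℓ : ℂ) else 0 := by
  rw [hΦ]
  by_cases hℓ : ℓ = ℓ'
  · subst hℓ
    simp only [single_apply, Sigma.mk.inj_iff, heq_eq_eq, Prod.mk.injEq, true_and, ite_and,
      Finset.sum_ite_eq, Finset.mem_univ, if_true, Fin.cast_eq_self, dite_true]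
    simp [eq_comm (a := γ')]
  · simp [hℓ]

lemma linearIndependent_choiColumn (hnn : ∀ ℓ, 0 < nn ℓ) (a : (ℓ : Fin p) → Fin (m ℓ)) :
    LinearIndependent ℂ fun t : (ℓ : Fin p) × (Fin (nn ℓ) × Fin (nn ℓ)) =>
      choiColumn Φ ⟨t.1, (a t.1, t.2.2)⟩ ⟨t.1, (a t.1, t.2.1)⟩ := by
  refine .of_pairwise_dual_eq_zero_one _
    (fun t => (nn t.1 : ℂ) • entryLinearMap ℂ ℂ ⟨t.1, (a t.1, t.2.1)⟩ ⟨t.1, (a t.1, t.2.2)⟩)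
    (fun t t' htt' => ?_) (fun t => ?_)
  · simp [choiColumn, apply_single_eq_ite hΦ, htt']
  · have : (nn t.1 : ℂ) ≠ 0 := by exact_mod_cast (hnn t.1).ne'
    simp [choiColumn, apply_single_eq_ite hΦ, this]

end BlockDepolarizing

theorem stmt_12_general (p : ℕ)
    (m nn : Fin p → ℕ) (hm : ∀ ℓ, 0 < m ℓ) (hnn : ∀ ℓ, 0 < nn ℓ)
    (N : ℕ) (hN : N = ∑ ℓ : Fin p, (nn ℓ) ^ 2)
    (Φ : Matrix ((ℓ : Fin p) × (Fin (m ℓ) × Fin (nn ℓ))) ((ℓ : Fin p) × (Fin (m ℓ) × Fin (nn ℓ))) ℂ →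
         Matrix ((ℓ : Fin p) × (Fin (m ℓ) × Fin (nn ℓ))) ((ℓ : Fin p) × (Fin (m ℓ) × Fin (nn ℓ))) ℂ)
    (hΦ : ∀ X (i i' : (ℓ : Fin p) × (Fin (m ℓ) × Fin (nn ℓ))),
      Φ X i i' =
        if h : i.1 = i'.1 then
          (if Fin.cast (congrArg nn h) i.2.2 = i'.2.2 then
            (1 / (nn i'.1 : ℂ)) *
              ∑ c : Fin (nn i'.1),
                X ⟨i'.1, (Fin.cast (congrArg m h) i.2.1, c)⟩ ⟨i'.1, (i'.2.1, c)⟩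
          else 0)
        else 0)
    (M : ℕ)
    (q : Fin M → ℝ)
    (V : Fin M →
      Matrix ((ℓ : Fin p) × (Fin (m ℓ) × Fin (nn ℓ))) ((ℓ : Fin p) × (Fin (m ℓ) × Fin (nn ℓ))) ℂ)
    (hdec : ∀ X, Φ X = ∑ k, (q k : ℂ) • (V k * X * (V k)ᴴ)) :
    N ≤ M := by
  have hkraus : ∀ X, Φ X = ∑ k, ((q k : ℂ) • V k) * X * (V k)ᴴ := by
    simpa only [smul_mul_assoc] using hdec
  have hindep := BlockDepolarizing.linearIndependent_choiColumn hΦ hnn fun ℓ => ⟨0, hm ℓ⟩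
  calc N = Fintype.card ((ℓ : Fin p) × (Fin (nn ℓ) × Fin (nn ℓ))) := by
        simp [hN, Fintype.card_sigma, sq]
    _ ≤ Fintype.card (Fin M) :=
        hindep.card_le_card_of_forall_mem_span fun _ => choiColumn_mem_span hkraus _ _
    _ = M := Fintype.card_fin M

/-- Any mixed-unitary decomposition with strictly positive weights of
the channel `Φ = (𝟙_{M_{m₁}} ⊗ Ω_{n₁}) ⊕ ⋯ ⊕ (𝟙_{M_{m_p}} ⊗ Ω_{n_p})` uses at least
`N = n₁² + ⋯ + n_p²` unitaries. -/
theorem stmt_12 (p : ℕ) (hp : 0 < p)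
    (m nn : Fin p → ℕ) (hm : ∀ ℓ, 0 < m ℓ) (hnn : ∀ ℓ, 0 < nn ℓ)
    (N : ℕ) (hN : N = ∑ ℓ : Fin p, (nn ℓ) ^ 2)
    (Φ : Matrix ((ℓ : Fin p) × (Fin (m ℓ) × Fin (nn ℓ))) ((ℓ : Fin p) × (Fin (m ℓ) × Fin (nn ℓ))) ℂ →
         Matrix ((ℓ : Fin p) × (Fin (m ℓ) × Fin (nn ℓ))) ((ℓ : Fin p) × (Fin (m ℓ) × Fin (nn ℓ))) ℂ)
    (hΦ : ∀ X (i i' : (ℓ : Fin p) × (Fin (m ℓ) × Fin (nn ℓ))),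
      Φ X i i' =
        if h : i.1 = i'.1 then
          (if Fin.cast (congrArg nn h) i.2.2 = i'.2.2 then
            (1 / (nn i'.1 : ℂ)) *
              ∑ c : Fin (nn i'.1),
                X ⟨i'.1, (Fin.cast (congrArg m h) i.2.1, c)⟩ ⟨i'.1, (i'.2.1, c)⟩
          else 0)
        else 0)
    (M : ℕ) (hM : 0 < M)
    (q : Fin M → ℝ) (hq : ∀ k, 0 < q k) (hq1 : ∑ k, q k = 1)
    (V : Fin M →
      Matrix ((ℓ : Fin p) × (Fin (m ℓ) × Fin (nn ℓ))) ((ℓ : Fin p) × (Fin (m ℓ) × Fin (nn ℓ))) ℂ)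
    (hV : ∀ k, (V k)ᴴ * V k = 1 ∧ V k * (V k)ᴴ = 1)
    (hdec : ∀ X, Φ X = ∑ k, (q k : ℂ) • (V k * X * (V k)ᴴ)) :
    N ≤ M :=
  stmt_12_general p m nn hm hnn N hN Φ hΦ M q V hdec
end

section
/- Let n ≥ 2 be an integer. For each permutation σ of {1,…,n}, let V_σ ∈ M_n(ℂ) be the permutation matrix with entries V_σ(i,j) = 1 if i = σ(j) and 0 otherwise. Then for every X ∈ M_n(ℂ), (1/n!) Σ_{σ ∈ Sym(n)} V_σ X V_σᴴ = ⟨J_n/n, X⟩·(J_n/n) + ⟨1_n − J_n/n, X⟩·(1/(n−1))·(1_n − J_n/n), where ⟨A,B⟩ = Tr(AᴴB) and J_n is the n×n all-ones matrix. -/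
/-!
Conjugation by `V σ` permutes rows and columns simultaneously, so the `(i, j)` entry of the twirl
is the average of `X (σ⁻¹ i) (σ⁻¹ j)` over `σ`. The symmetric group acts transitively on points and
on ordered pairs of distinct points, and averaging over a group at a point of an orbit is averaging
over the orbit. Hence the twirl has `Tr X / n` on the diagonal and the mean of the off-diagonal
entries of `X` off it, which are exactly the entries of the right-hand side.
-/

open Matrix Finset

namespace MulAction

variable {G α M : Type*} [Group G] [MulAction G α] [AddCommMonoid M]

theorem sum_smul_eq_of_smul_eq [Fintype G] (f : α → M) {x y : α} {h : G} (hxy : h • x = y) :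
    ∑ g : G, f (g • y) = ∑ g : G, f (g • x) := by
  subst hxy
  exact Fintype.sum_equiv (Equiv.mulRight h) _ _ fun g => by simp [mul_smul]

theorem sum_smul_eq_sum_of_smul_mem (f : α → M) {s : Finset α}
    (hs : ∀ g : G, ∀ y ∈ s, g • y ∈ s) (g : G) :
    ∑ y ∈ s, f (g • y) = ∑ y ∈ s, f y :=
  sum_nbij' (g • ·) (g⁻¹ • ·) (fun y hy => hs g y hy) (fun y hy => hs g⁻¹ y hy)
    (fun y _ => inv_smul_smul g y) (fun y _ => smul_inv_smul g y) fun _ _ => rfl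

theorem card_nsmul_sum_smul_eq [Fintype G] {s : Finset α} (hs : ∀ g : G, ∀ y ∈ s, g • y ∈ s)
    {x : α} (hx : ∀ y ∈ s, ∃ g : G, g • x = y) (f : α → M) :
    #s • ∑ g : G, f (g • x) = Fintype.card G • ∑ y ∈ s, f y :=
  calc #s • ∑ g : G, f (g • x) = ∑ y ∈ s, ∑ g : G, f (g • y) := by
        rw [← sum_const]
        refine sum_congr rfl fun y hy => ?_
        obtain ⟨h, hxy⟩ := hx y hy
        exact (sum_smul_eq_of_smul_eq f hxy).symm
    _ = ∑ g : G, ∑ y ∈ s, f (g • y) := sum_comm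
    _ = Fintype.card G • ∑ y ∈ s, f y := by
        simp only [sum_smul_eq_sum_of_smul_mem f hs, sum_const, card_univ]

end MulAction

theorem Finset.sum_diag_add_sum_offDiag {α M : Type*} [DecidableEq α] [AddCommMonoid M]
    (s : Finset α) (f : α × α → M) :
    ∑ a ∈ s, f (a, a) + ∑ p ∈ s.offDiag, f p = ∑ p ∈ s ×ˢ s, f p := by
  rw [← sum_diag, ← sum_union (disjoint_diag_offDiag s), diag_union_offDiag]

namespace Equiv.Perm

variable {α M : Type*} [Fintype α] [DecidableEq α] [AddCommMonoid M]

theorem card_nsmul_sum_apply (f : α → M) (i : α) :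
    Fintype.card α • ∑ σ : Perm α, f (σ i) = (Fintype.card α).factorial • ∑ k, f k := by
  simpa [Fintype.card_perm] using
    MulAction.card_nsmul_sum_smul_eq (G := Perm α) (s := univ) (by simp)
      (fun y _ => MulAction.exists_smul_eq (Perm α) i y) f

theorem card_offDiag_nsmul_sum_apply_apply (f : α → α → M) {i j : α} (hij : i ≠ j) :
    #(univ : Finset α).offDiag • ∑ σ : Perm α, f (σ i) (σ j) =
      (Fintype.card α).factorial • ∑ p ∈ (univ : Finset α).offDiag, f p.1 p.2 := by
  have hpair : ∀ p ∈ (univ : Finset α).offDiag, ∃ σ : Perm α, σ • (i, j) = p := by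
    rintro ⟨k, l⟩ hkl
    obtain ⟨σ, hσi, hσj⟩ := MulAction.is_two_pretransitive_iff.mp
      (isMultiplyPretransitive α 2) hij (mem_offDiag.mp hkl).2.2
    exact ⟨σ, Prod.ext hσi hσj⟩
  simpa [Fintype.card_perm] using
    MulAction.card_nsmul_sum_smul_eq (by simp [Perm.smul_def]) hpair fun p => f p.1 p.2

theorem permMatrix_mul_mul_conjTranspose_permMatrix {R : Type*} [NonAssocSemiring R]
    [StarRing R] (σ : Perm α) (X : Matrix α α R) :
    σ.permMatrix R * X * (σ.permMatrix R)ᴴ = X.submatrix σ σ := by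
  rw [conjTranspose_permMatrix, PEquiv.toMatrix_toPEquiv_mul, PEquiv.mul_toMatrix_toPEquiv]
  rfl

end Equiv.Perm

namespace Matrix

variable {α R : Type*} [Fintype α]

theorem trace_conjTranspose_smul_of_one_mul [CommSemiring R] [StarRing R] (c : R)
    (X : Matrix α α R) :
    trace ((c • of fun _ _ : α => (1 : R))ᴴ * X) = star c * ∑ k, ∑ l, X k l := by
  simp only [trace, Matrix.diag, mul_apply, conjTranspose_apply, Matrix.smul_apply, of_apply,
    smul_eq_mul, mul_one, mul_sum]
  exact sum_comm

variable [DecidableEq α]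

theorem card_nsmul_sum_submatrix_perm_apply_self [AddCommMonoid R] (X : Matrix α α R) (i : α) :
    Fintype.card α • (∑ σ : Equiv.Perm α, X.submatrix σ σ) i i =
      (Fintype.card α).factorial • X.trace := by
  simpa [Matrix.sum_apply, trace] using Equiv.Perm.card_nsmul_sum_apply (fun k => X k k) i

theorem card_offDiag_nsmul_sum_submatrix_perm_apply [AddCommGroup R] (X : Matrix α α R)
    {i j : α} (hij : i ≠ j) :
    (Fintype.card α * Fintype.card α - Fintype.card α) •
        (∑ σ : Equiv.Perm α, X.submatrix σ σ) i j =
      (Fintype.card α).factorial • (∑ k, ∑ l, X k l - X.trace) := by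
  have h := Equiv.Perm.card_offDiag_nsmul_sum_apply_apply (fun k l => X k l) hij
  have hsum := sum_diag_add_sum_offDiag univ fun p : α × α => X p.1 p.2
  rw [sum_product] at hsum
  rw [offDiag_card, card_univ] at h
  simp only [trace, diag_apply, ← hsum, add_sub_cancel_left, Matrix.sum_apply, submatrix_apply]
  exact h

end Matrix

/-- The permutation-twirling channel equals
`X ↦ ⟨J/n, X⟩·(J/n) + ⟨1 − J/n, X⟩·(1/(n−1))·(1 − J/n)`. -/
theorem stmt_14 (n : ℕ) (hn : 2 ≤ n)
    (V : Equiv.Perm (Fin n) → Matrix (Fin n) (Fin n) ℂ)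
    (hV : ∀ (σ : Equiv.Perm (Fin n)) (i j : Fin n), V σ i j = if i = σ j then 1 else 0)
    (J : Matrix (Fin n) (Fin n) ℂ) (hJ : ∀ i j, J i j = 1) :
    ∀ X : Matrix (Fin n) (Fin n) ℂ,
      (1 / (n.factorial : ℂ)) • ∑ σ : Equiv.Perm (Fin n), V σ * X * (V σ)ᴴ =
        Matrix.trace (((1 / (n : ℂ)) • J)ᴴ * X) • ((1 / (n : ℂ)) • J) +
        (Matrix.trace ((1 - (1 / (n : ℂ)) • J)ᴴ * X) * (1 / ((n : ℂ) - 1))) •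
          (1 - (1 / (n : ℂ)) • J) := by
  intro X
  obtain rfl : J = of fun _ _ => 1 := ext hJ
  have hV_eq : ∀ σ, V σ = σ⁻¹.permMatrix ℂ := fun σ => by
    ext i j
    simp [hV, PEquiv.toMatrix_apply, Equiv.symm_apply_eq]
  have htwirl : ∑ σ, V σ * X * (V σ)ᴴ = ∑ σ : Equiv.Perm (Fin n), X.submatrix σ σ := by
    simp only [hV_eq, Equiv.Perm.permMatrix_mul_mul_conjTranspose_permMatrix]
    exact Fintype.sum_equiv (Equiv.inv _) _ _ fun _ => rfl
  have hn0 : (n : ℂ) ≠ 0 := by exact_mod_cast (by omega : n ≠ 0)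
  have hn1 : (n : ℂ) - 1 ≠ 0 := sub_ne_zero.mpr (by exact_mod_cast (by omega : n ≠ 1))
  have hfac : (n.factorial : ℂ) ≠ 0 := by exact_mod_cast n.factorial_ne_zero
  rw [htwirl, conjTranspose_sub, conjTranspose_one, Matrix.sub_mul, Matrix.one_mul, trace_sub,
    trace_conjTranspose_smul_of_one_mul]
  ext i j
  simp only [one_div, Matrix.smul_apply, smul_eq_mul, star_inv₀, star_natCast, smul_of,
    Matrix.add_apply, of_apply, Pi.smul_apply, mul_one, Matrix.sub_apply]
  rcases eq_or_ne i j with rfl | hij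
  · have h := card_nsmul_sum_submatrix_perm_apply_self X i
    rw [Fintype.card_fin, nsmul_eq_mul, nsmul_eq_mul] at h
    rw [one_apply_eq]
    field_simp
    linear_combination (n : ℂ) * h
  · have h := card_offDiag_nsmul_sum_submatrix_perm_apply X hij
    rw [Fintype.card_fin, nsmul_eq_mul, nsmul_eq_mul, Nat.cast_sub (Nat.le_mul_self n),
      Nat.cast_mul] at h
    rw [one_apply_ne hij]
    field_simp
    linear_combination (n : ℂ) * h
end

section
/- Let n be a positive integer and set N = (n−1)² + 1. For each permutation σ of {1,…,n}, let V_σ ∈ M_n(ℂ) be the permutation matrix with entries V_σ(i,j) = 1 if i = σ(j) and 0 otherwise. Then there exist unitary matrices W_1, …, W_N ∈ M_n(ℂ) such that (1/n!) Σ_{σ ∈ Sym(n)} V_σ X V_σᴴ = (1/N) Σ_{k=1}^{N} W_k X W_kᴴ for every X ∈ M_n(ℂ). -/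
/-!
Let `n = m + 1`, `N = m² + 1`, let `F` be the unitary DFT matrix of size `n` (its first column is
constant) and `J` the all-ones matrix. For `k ∈ ℤ/N` put `C_k = D_k (1 ⊕ F_m) D'_k` with diagonal
matrices `D_k, D'_k` of `N`-th roots of unity, chosen so that the `1 + m²` nonzero entries of `C_k`
carry the phases `ζ^(k ℓ)` with pairwise distinct labels `ℓ` modulo `N`. Averaging `C_k Y C_kᴴ`
over `k` kills every cross term and leaves `diag(Y₀₀, t, …, t)`, `t` the mean of the other diagonal
entries of `Y`; so for `W_k = F C_k Fᴴ` the average of `W_k X W_kᴴ` is a combination of `1` and `J`.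

Both this average and the twirl are invariant under simultaneous permutation of rows and columns,
and since `Sym(n)` is 2-transitive such a matrix is determined by its trace and the sum of its
entries, i.e. `tr M` and `tr (J M)`. Both channels preserve these two functionals, being averages
of conjugations by unitaries commuting with `J`.
-/

lemma IsPrimitiveRoot.sum_zpow_mul {R : Type*} [Field R] {ζ : R} {N : ℕ}
    (hζ : IsPrimitiveRoot ζ N) (c : ℤ) :
    ∑ k : Fin N, ζ ^ ((k : ℤ) * c) = if (N : ℤ) ∣ c then (N : R) else 0 := by
  have hpow (k : ℕ) : ζ ^ ((k : ℤ) * c) = (ζ ^ c) ^ k := by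
    rw [mul_comm, zpow_mul, zpow_natCast]
  simp only [hpow]
  rw [Fin.sum_univ_eq_sum_range (fun k => (ζ ^ c) ^ k)]
  split_ifs with h
  · simp [(hζ.zpow_eq_one_iff_dvd c).2 h]
  · rw [geom_sum_eq ((hζ.zpow_eq_one_iff_dvd c).not.2 h), ← zpow_natCast, ← zpow_mul, mul_comm,
      zpow_mul, zpow_natCast, hζ.pow_eq_one, one_zpow, sub_self, zero_div]

lemma IsPrimitiveRoot.star_zpow {ζ : ℂ} {N : ℕ} (hζ : IsPrimitiveRoot ζ N) (hN : N ≠ 0)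
    (c : ℤ) : star (ζ ^ c) = ζ ^ (-c) := by
  rw [star_zpow₀, Complex.star_def, ← Complex.inv_eq_conj (hζ.norm'_eq_one hN),
    inv_zpow']

lemma Fin.intCast_dvd_sub_iff {n : ℕ} (a b : Fin n) : (n : ℤ) ∣ (a : ℤ) - b ↔ a = b := by
  refine ⟨fun h => Fin.ext ?_, fun h => by simp [h]⟩
  have := Int.eq_zero_of_abs_lt_dvd h (by rw [abs_lt]; omega)
  omega

namespace Matrix

variable {ι α : Type*}

def allOnes (ι α : Type*) [One α] : Matrix ι ι α := of fun _ _ => 1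

def IsPermInvariant (M : Matrix ι ι α) : Prop := ∀ σ : Equiv.Perm ι, M.submatrix σ σ = M

lemma isPermInvariant_one [DecidableEq ι] [Zero α] [One α] :
    IsPermInvariant (1 : Matrix ι ι α) :=
  fun σ => submatrix_one_equiv σ

lemma isPermInvariant_allOnes [One α] : IsPermInvariant (allOnes ι α) := fun _ => rfl

namespace IsPermInvariant

variable {M M' : Matrix ι ι α}

lemma add [Add α] (hM : IsPermInvariant M) (hM' : IsPermInvariant M') :
    IsPermInvariant (M + M') :=
  fun σ => congrArg₂ (· + ·) (hM σ) (hM' σ)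

lemma sub [Sub α] (hM : IsPermInvariant M) (hM' : IsPermInvariant M') :
    IsPermInvariant (M - M') :=
  fun σ => congrArg₂ (· - ·) (hM σ) (hM' σ)

lemma smul {R : Type*} [SMul R α] (c : R) (hM : IsPermInvariant M) :
    IsPermInvariant (c • M) :=
  fun σ => congrArg (c • ·) (hM σ)

lemma apply_self_eq [DecidableEq ι] (hM : IsPermInvariant M) (a b : ι) : M a a = M b b := by
  simpa using congrFun (congrFun (hM (Equiv.swap a b)) b) b

lemma apply_eq_of_ne (hM : IsPermInvariant M) {a b c d : ι} (hab : a ≠ b) (hcd : c ≠ d) :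
    M a b = M c d := by
  obtain ⟨σ, rfl, rfl⟩ :=
    MulAction.is_two_pretransitive_iff.mp (Equiv.Perm.isMultiplyPretransitive ι 2) hab hcd
  exact (congrFun (congrFun (hM σ) a) b).symm

variable [Fintype ι] [DecidableEq ι] [Field α] [CharZero α]

lemma eq_zero (hM : IsPermInvariant M) (htr : M.trace = 0)
    (hsum : (allOnes ι α * M).trace = 0) : M = 0 := by
  have hdiag (a : ι) : M a a = 0 := by
    have : Nonempty ι := ⟨a⟩
    simp only [trace, diag_apply, hM.apply_self_eq _ a, Finset.sum_const, Finset.card_univ,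
      nsmul_eq_mul, mul_eq_zero, Nat.cast_eq_zero, Fintype.card_ne_zero, false_or] at htr
    exact htr
  ext a b
  obtain rfl | hab := eq_or_ne a b
  · exact hdiag a
  have hrow (i : ι) : ∑ j, M i j = ((Fintype.card ι - 1 : ℕ) : α) * M a b := by
    rw [← Finset.add_sum_erase _ _ (Finset.mem_univ i), hdiag i, zero_add,
      Finset.sum_congr rfl fun j hj => hM.apply_eq_of_ne (Finset.ne_of_mem_erase hj).symm hab,
      Finset.sum_const, Finset.card_erase_of_mem (Finset.mem_univ i), Finset.card_univ,
      nsmul_eq_mul]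
  have hcard : 1 < Fintype.card ι := Fintype.one_lt_card_iff.2 ⟨a, b, hab⟩
  simp only [trace, diag_apply, mul_apply, allOnes, of_apply, one_mul] at hsum
  rw [Finset.sum_comm] at hsum
  simpa [hrow, show Fintype.card ι ≠ 0 by omega, show Fintype.card ι - 1 ≠ 0 by omega] using hsum

lemma eq_of_trace_eq (hM : IsPermInvariant M) (hM' : IsPermInvariant M')
    (htr : M.trace = M'.trace) (hsum : (allOnes ι α * M).trace = (allOnes ι α * M').trace) :
    M = M' :=
  sub_eq_zero.1 <| (hM.sub hM').eq_zero (by rw [trace_sub, htr, sub_self])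
    (by rw [Matrix.mul_sub, trace_sub, hsum, sub_self])

end IsPermInvariant

lemma isPermInvariant_sum_submatrix [Fintype ι] [DecidableEq ι] [AddCommMonoid α]
    (X : Matrix ι ι α) : IsPermInvariant (∑ σ : Equiv.Perm ι, X.submatrix σ σ) := fun τ => by
  ext i j
  simpa [sum_apply] using Equiv.sum_comp (Equiv.mulRight τ) fun σ => X (σ i) (σ j)

section Unitary

variable [Fintype ι] [DecidableEq ι] [CommRing α] [StarRing α] {κ : Type*} [Fintype κ]

lemma trace_conj_of_mem_unitaryGroup {U : Matrix ι ι α} (hU : U ∈ unitaryGroup ι α)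
    (X : Matrix ι ι α) : (U * X * Uᴴ).trace = X.trace := by
  rw [trace_mul_comm, ← Matrix.mul_assoc, ← star_eq_conjTranspose,
    mem_unitaryGroup_iff'.1 hU, Matrix.one_mul]

lemma trace_sum_conj {U : κ → Matrix ι ι α} (hU : ∀ k, U k ∈ unitaryGroup ι α)
    (X : Matrix ι ι α) : (∑ k, U k * X * (U k)ᴴ).trace = Fintype.card κ • X.trace := by
  simp [trace_sum, trace_conj_of_mem_unitaryGroup (hU _)]

lemma trace_allOnes_mul_sum_conj {U : κ → Matrix ι ι α} (hU : ∀ k, U k ∈ unitaryGroup ι α)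
    (hJ : ∀ k, Commute (U k) (allOnes ι α)) (X : Matrix ι ι α) :
    (allOnes ι α * ∑ k, U k * X * (U k)ᴴ).trace = Fintype.card κ • (allOnes ι α * X).trace := by
  have h (k : κ) : allOnes ι α * (U k * X * (U k)ᴴ) = U k * (allOnes ι α * X) * (U k)ᴴ := by
    rw [← Matrix.mul_assoc, ← Matrix.mul_assoc, ← (hJ k).eq, Matrix.mul_assoc (U k)]
  simp [Matrix.mul_sum, h, trace_sum, trace_conj_of_mem_unitaryGroup (hU _)]

lemma diagonal_mem_unitaryGroup_s15 {d : ι → α} (hd : ∀ i, star (d i) * d i = 1) :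
    diagonal d ∈ unitaryGroup ι α := by
  rw [mem_unitaryGroup_iff', star_eq_conjTranspose, diagonal_conjTranspose,
    diagonal_mul_diagonal]
  simp only [Pi.star_apply, hd]
  exact diagonal_one

end Unitary

section PermMatrix

variable [Fintype ι] [DecidableEq ι] [CommRing α] [StarRing α] {V : Equiv.Perm ι → Matrix ι ι α}

lemma conj_eq_submatrix_of_apply (hV : ∀ σ i j, V σ i j = if i = σ j then 1 else 0)
    (σ : Equiv.Perm ι) (X : Matrix ι ι α) : V σ * X * (V σ)ᴴ = X.submatrix σ.symm σ.symm := by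
  ext i j
  simp [mul_apply, hV, ← Equiv.symm_apply_eq, apply_ite (star : α → α)]

lemma mem_unitaryGroup_of_apply (hV : ∀ σ i j, V σ i j = if i = σ j then 1 else 0)
    (σ : Equiv.Perm ι) : V σ ∈ unitaryGroup ι α := by
  rw [mem_unitaryGroup_iff, star_eq_conjTranspose]
  simpa using conj_eq_submatrix_of_apply hV σ 1

lemma commute_allOnes_of_apply (hV : ∀ σ i j, V σ i j = if i = σ j then 1 else 0)
    (σ : Equiv.Perm ι) : Commute (V σ) (allOnes ι α) := by
  have hVV : (V σ)ᴴ * V σ = 1 := mem_unitaryGroup_iff'.1 (mem_unitaryGroup_of_apply hV σ)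
  calc V σ * allOnes ι α = V σ * allOnes ι α * (V σ)ᴴ * V σ := by
        rw [Matrix.mul_assoc _ (V σ)ᴴ, hVV, Matrix.mul_one]
    _ = allOnes ι α * V σ := by
        rw [conj_eq_submatrix_of_apply hV, isPermInvariant_allOnes]

lemma isPermInvariant_sum_conj_of_apply (hV : ∀ σ i j, V σ i j = if i = σ j then 1 else 0)
    (X : Matrix ι ι α) : IsPermInvariant (∑ σ, V σ * X * (V σ)ᴴ) := by
  simp only [conj_eq_submatrix_of_apply hV]
  rw [← Equiv.sum_comp (Equiv.inv _)]
  exact isPermInvariant_sum_submatrix X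

end PermMatrix

section Dephasing

variable [Fintype ι] [DecidableEq ι]

lemma sum_conj_eq_smul_diagonal {ζ : ℂ} {N : ℕ} (hζ : IsPrimitiveRoot ζ N) (hN : N ≠ 0)
    {A : Fin N → Matrix ι ι ℂ} {c : Matrix ι ι ℂ} {g : ι → ι → ℤ}
    (hA : ∀ k p q, A k p q = c p q * ζ ^ ((k : ℤ) * g p q))
    (hg : ∀ p q p' q', c p q ≠ 0 → c p' q' ≠ 0 → (N : ℤ) ∣ g p q - g p' q' → p = p' ∧ q = q')
    (Y : Matrix ι ι ℂ) :
    ∑ k, A k * Y * (A k)ᴴ = (N : ℂ) • diagonal fun p => ∑ q, c p q * star (c p q) * Y q q := by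
  ext p p'
  have hterm (q q' : ι) : ∑ k, A k p q * Y q q' * star (A k p' q') =
      if p = p' ∧ q = q' then N * (c p q * star (c p q) * Y q q) else 0 := by
    have h (k : Fin N) : A k p q * Y q q' * star (A k p' q') =
        c p q * star (c p' q') * Y q q' * ζ ^ ((k : ℤ) * (g p q - g p' q')) := by
      rw [hA, hA, star_mul', hζ.star_zpow hN, mul_sub, zpow_sub₀ (hζ.ne_zero hN),
        _root_.zpow_neg]
      ring
    rw [Finset.sum_congr rfl fun k _ => h k, ← Finset.mul_sum, hζ.sum_zpow_mul]
    by_cases hc : c p q = 0 ∨ c p' q' = 0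
    · rcases hc with hc | hc <;> split_ifs <;> simp_all
    rw [not_or] at hc
    split_ifs with h₁ h₂ h₂
    · obtain ⟨rfl, rfl⟩ := h₂; ring
    · exact absurd (hg _ _ _ _ hc.1 hc.2 h₁) h₂
    · obtain ⟨rfl, rfl⟩ := h₂; simp at h₁
    · simp
  calc (∑ k, A k * Y * (A k)ᴴ) p p'
      = ∑ q', ∑ q, ∑ k, A k p q * Y q q' * star (A k p' q') := by
        simp only [Matrix.sum_apply, mul_apply, conjTranspose_apply, Finset.sum_mul]
        rw [Finset.sum_comm]
        refine Finset.sum_congr rfl fun q' _ => ?_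
        rw [Finset.sum_comm]
    _ = _ := by
        simp only [hterm]
        by_cases h : p = p'
        · subst h
          simp [Finset.mul_sum]
        · simp [h]

end Dephasing

variable {m : ℕ}

def oneBlockDiagonal [Zero α] [One α] (B : Matrix (Fin m) (Fin m) α) :
    Matrix (Fin (m + 1)) (Fin (m + 1)) α :=
  of (vecCons (vecCons 1 0) fun i => vecCons 0 (B i))

section OneBlockDiagonal

variable [Zero α] [One α] (B : Matrix (Fin m) (Fin m) α)

@[simp] lemma oneBlockDiagonal_zero_zero : oneBlockDiagonal B 0 0 = 1 := rfl
@[simp] lemma oneBlockDiagonal_zero_succ (j : Fin m) : oneBlockDiagonal B 0 j.succ = 0 := rfl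
@[simp] lemma oneBlockDiagonal_succ_zero (i : Fin m) : oneBlockDiagonal B i.succ 0 = 0 := rfl
@[simp] lemma oneBlockDiagonal_succ_succ (i j : Fin m) :
    oneBlockDiagonal B i.succ j.succ = B i j := rfl

lemma oneBlockDiagonal_ne_zero {p q : Fin (m + 1)} (h : oneBlockDiagonal B p q ≠ 0) :
    p = 0 ∧ q = 0 ∨ ∃ i j : Fin m, p = i.succ ∧ q = j.succ := by
  cases p using Fin.cases <;> cases q using Fin.cases <;> simp_all

end OneBlockDiagonal

lemma oneBlockDiagonal_mem_unitaryGroup [CommRing α] [StarRing α] {B : Matrix (Fin m) (Fin m) α}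
    (hB : B ∈ unitaryGroup (Fin m) α) : oneBlockDiagonal B ∈ unitaryGroup (Fin (m + 1)) α := by
  rw [mem_unitaryGroup_iff] at *
  ext p q
  cases p using Fin.cases with
  | zero =>
    cases q using Fin.cases <;> simp [mul_apply, Fin.sum_univ_succ, (Fin.succ_ne_zero _).symm]
  | succ i =>
    cases q using Fin.cases with
    | zero => simp [mul_apply, Fin.sum_univ_succ]
    | succ j => simpa [mul_apply, Fin.sum_univ_succ, one_apply] using congrFun (congrFun hB i) j

end Matrix

open Matrix BigOperators
open scoped Real

noncomputable def primRoot (N : ℕ) : ℂ := Complex.exp (2 * π * Complex.I / N)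

lemma primRoot_ne_zero (N : ℕ) : primRoot N ≠ 0 := Complex.exp_ne_zero _

lemma isPrimitiveRoot_primRoot {N : ℕ} (hN : N ≠ 0) : IsPrimitiveRoot (primRoot N) N :=
  Complex.isPrimitiveRoot_exp N hN

noncomputable def dft (n : ℕ) : Matrix (Fin n) (Fin n) ℂ :=
  of fun a b => primRoot n ^ ((a : ℤ) * b) / Real.sqrt n

lemma dft_apply_mul_star_dft_apply {n : ℕ} (a b a' b' : Fin n) :
    dft n a b * star (dft n a' b') = primRoot n ^ ((a : ℤ) * b - a' * b') / n := by
  have hn : n ≠ 0 := a.pos.ne'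
  have hsqrt : ((Real.sqrt n : ℝ) : ℂ) * (Real.sqrt n : ℝ) = n := by
    rw [← Complex.ofReal_mul, Real.mul_self_sqrt n.cast_nonneg, Complex.ofReal_natCast]
  rw [dft, of_apply, of_apply, star_div₀, (isPrimitiveRoot_primRoot hn).star_zpow hn,
    Complex.star_def, Complex.conj_ofReal, div_mul_div_comm, hsqrt,
    ← zpow_add₀ (primRoot_ne_zero n), sub_eq_add_neg]

lemma dft_mem_unitaryGroup (n : ℕ) : dft n ∈ unitaryGroup (Fin n) ℂ := by
  rw [mem_unitaryGroup_iff]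
  ext a b
  have hn : n ≠ 0 := a.pos.ne'
  have h (j : Fin n) :
      dft n a j * star (dft n b j) = primRoot n ^ ((j : ℤ) * (a - b)) / n := by
    rw [dft_apply_mul_star_dft_apply]
    ring_nf
  simp only [mul_apply, star_apply, h, ← Finset.sum_div,
    (isPrimitiveRoot_primRoot hn).sum_zpow_mul, Fin.intCast_dvd_sub_iff, one_apply]
  split_ifs <;> simp [hn]

noncomputable def dftConj (m : ℕ) :
    Matrix (Fin (m + 1)) (Fin (m + 1)) ℂ ≃⋆ₐ[ℂ] Matrix (Fin (m + 1)) (Fin (m + 1)) ℂ :=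
  Unitary.conjStarAlgAut ℂ _ ⟨dft (m + 1), dft_mem_unitaryGroup _⟩

lemma dftConj_single_zero (m : ℕ) :
    dftConj m (single 0 0 1) = (1 / (m + 1 : ℂ)) • allOnes (Fin (m + 1)) ℂ := by
  ext a b
  simp only [dftConj, Unitary.conjStarAlgAut_apply, mul_apply, single_apply, star_apply, ite_and,
    mul_ite, ite_mul, mul_one, mul_zero, zero_mul, Finset.sum_ite_eq, Finset.mem_univ, if_true,
    dft_apply_mul_star_dft_apply]
  simp [allOnes]

/-- With these phases the entry `(i + 1, j + 1)` of `dephasingUnitary m k` gets the label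
`m * i + j + 1 ∈ [1, m²]` and the entry `(0, 0)` the label `0`: distinct modulo `m * m + 1`. -/
def rowPhase (m : ℕ) : Fin (m + 1) → ℤ := vecCons 0 fun i => m * i

def colPhase (m : ℕ) : Fin (m + 1) → ℤ := vecCons 0 fun j => j + 1

noncomputable def dephasingUnitary (m : ℕ) (k : ℤ) : Matrix (Fin (m + 1)) (Fin (m + 1)) ℂ :=
  diagonal (fun p => primRoot (m * m + 1) ^ (k * rowPhase m p)) * oneBlockDiagonal (dft m) *
    diagonal (fun q => primRoot (m * m + 1) ^ (k * colPhase m q))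

lemma dephasingUnitary_apply (m : ℕ) (k : ℤ) (p q : Fin (m + 1)) :
    dephasingUnitary m k p q = oneBlockDiagonal (dft m) p q *
      primRoot (m * m + 1) ^ (k * (rowPhase m p + colPhase m q)) := by
  rw [dephasingUnitary, mul_diagonal, diagonal_mul, mul_add, zpow_add₀ (primRoot_ne_zero _)]
  ring

lemma rowPhase_add_colPhase_zero (m : ℕ) :
    rowPhase m 0 + colPhase m 0 = ((0 : Fin (m * m + 1)) : ℕ) := by
  simp [rowPhase, colPhase]

lemma rowPhase_add_colPhase_succ {m : ℕ} (i j : Fin m) :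
    rowPhase m i.succ + colPhase m j.succ = ((finProdFinEquiv (i, j)).succ : ℕ) := by
  simp only [rowPhase, colPhase, cons_val_succ, finProdFinEquiv, Equiv.coe_fn_mk, Fin.succ_mk,
    Nat.cast_add, Nat.cast_mul, Nat.cast_one]
  ring

lemma eq_of_dvd_phase_sub {m : ℕ} {p q p' q' : Fin (m + 1)}
    (h : oneBlockDiagonal (dft m) p q ≠ 0) (h' : oneBlockDiagonal (dft m) p' q' ≠ 0)
    (hdvd : ((m * m + 1 : ℕ) : ℤ) ∣
      rowPhase m p + colPhase m q - (rowPhase m p' + colPhase m q')) :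
    p = p' ∧ q = q' := by
  rcases oneBlockDiagonal_ne_zero _ h with ⟨rfl, rfl⟩ | ⟨i, j, rfl, rfl⟩ <;>
    rcases oneBlockDiagonal_ne_zero _ h' with ⟨rfl, rfl⟩ | ⟨i', j', rfl, rfl⟩ <;>
    simp only [rowPhase_add_colPhase_zero, rowPhase_add_colPhase_succ,
      Fin.intCast_dvd_sub_iff] at hdvd <;>
    simp_all [(Fin.succ_ne_zero _).symm]

lemma diagonal_oneBlockDiagonal_dft (m : ℕ) (Y : Matrix (Fin (m + 1)) (Fin (m + 1)) ℂ) :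
    (diagonal fun p => ∑ q, oneBlockDiagonal (dft m) p q *
        star (oneBlockDiagonal (dft m) p q) * Y q q) =
      ((∑ j : Fin m, Y j.succ j.succ) / m) • 1 +
        (Y 0 0 - (∑ j : Fin m, Y j.succ j.succ) / m) • single 0 0 1 := by
  have hdft (i j : Fin m) : dft m i j * star (dft m i j) = 1 / m := by
    rw [dft_apply_mul_star_dft_apply, sub_self, zpow_zero]
  ext p q
  cases p using Fin.cases <;> cases q using Fin.cases <;>
    simp only [diagonal_apply, Fin.sum_univ_succ, oneBlockDiagonal_zero_zero,
      oneBlockDiagonal_zero_succ, oneBlockDiagonal_succ_zero, oneBlockDiagonal_succ_succ, hdft] <;>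
    simp [one_apply, Finset.mul_sum, div_eq_inv_mul, (Fin.succ_ne_zero _).symm]

lemma sum_dephasingUnitary_conj (m : ℕ) (Y : Matrix (Fin (m + 1)) (Fin (m + 1)) ℂ) :
    ∑ k : Fin (m * m + 1), dephasingUnitary m k * Y * (dephasingUnitary m k)ᴴ =
      ((m * m + 1 : ℕ) : ℂ) • (((∑ j : Fin m, Y j.succ j.succ) / m) • 1 +
        (Y 0 0 - (∑ j : Fin m, Y j.succ j.succ) / m) • single 0 0 1) := by
  rw [sum_conj_eq_smul_diagonal (isPrimitiveRoot_primRoot (Nat.succ_ne_zero _))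
    (Nat.succ_ne_zero _) (fun k => dephasingUnitary_apply m k)
    (fun _ _ _ _ => eq_of_dvd_phase_sub), diagonal_oneBlockDiagonal_dft]

lemma dephasingUnitary_mem_unitaryGroup (m : ℕ) (k : ℤ) :
    dephasingUnitary m k ∈ unitaryGroup (Fin (m + 1)) ℂ := by
  have hζ := isPrimitiveRoot_primRoot (Nat.succ_ne_zero (m * m))
  have hphase (c : ℤ) : star (primRoot (m * m + 1) ^ c) * primRoot (m * m + 1) ^ c = 1 := by
    rw [hζ.star_zpow (Nat.succ_ne_zero _), _root_.zpow_neg,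
      inv_mul_cancel₀ (zpow_ne_zero _ (primRoot_ne_zero _))]
  exact mul_mem (mul_mem (diagonal_mem_unitaryGroup_s15 fun _ => hphase _)
    (oneBlockDiagonal_mem_unitaryGroup (dft_mem_unitaryGroup m)))
    (diagonal_mem_unitaryGroup_s15 fun _ => hphase _)

lemma dephasingUnitary_commute_single (m : ℕ) (k : ℤ) :
    Commute (dephasingUnitary m k) (single 0 0 1) := by
  ext p q
  cases p using Fin.cases <;> cases q using Fin.cases <;>
    simp [mul_apply, dephasingUnitary_apply, single_apply, rowPhase, colPhase,
      (Fin.succ_ne_zero _).symm]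

noncomputable def twirlUnitary (m : ℕ) (k : ℤ) : Matrix (Fin (m + 1)) (Fin (m + 1)) ℂ :=
  dftConj m (dephasingUnitary m k)

lemma twirlUnitary_mem_unitaryGroup (m : ℕ) (k : ℤ) :
    twirlUnitary m k ∈ unitaryGroup (Fin (m + 1)) ℂ :=
  Unitary.map_mem _ (dephasingUnitary_mem_unitaryGroup m k)

lemma twirlUnitary_commute_allOnes (m : ℕ) (k : ℤ) :
    Commute (twirlUnitary m k) (allOnes (Fin (m + 1)) ℂ) := by
  have h : allOnes (Fin (m + 1)) ℂ = (m + 1 : ℂ) • dftConj m (single 0 0 1) := by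
    rw [dftConj_single_zero, smul_smul, mul_one_div_cancel (Nat.cast_add_one_ne_zero m), one_smul]
  rw [h]
  exact ((dephasingUnitary_commute_single m k).map (dftConj m)).smul_right _

lemma isPermInvariant_sum_twirlUnitary_conj (m : ℕ) (X : Matrix (Fin (m + 1)) (Fin (m + 1)) ℂ) :
    IsPermInvariant (∑ k : Fin (m * m + 1), twirlUnitary m k * X * (twirlUnitary m k)ᴴ) := by
  have h (k : ℤ) : twirlUnitary m k * X * (twirlUnitary m k)ᴴ = dftConj m
      (dephasingUnitary m k * (dftConj m).symm X * (dephasingUnitary m k)ᴴ) := by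
    simp only [twirlUnitary, ← star_eq_conjTranspose, map_mul, map_star,
      StarAlgEquiv.apply_symm_apply]
  simp only [h, ← map_sum, sum_dephasingUnitary_conj, map_smul, map_add, map_one,
    dftConj_single_zero]
  exact ((isPermInvariant_one.smul _).add ((isPermInvariant_allOnes.smul _).smul _)).smul _

theorem stmt_15_general (n : ℕ)
    (V : Equiv.Perm (Fin n) → Matrix (Fin n) (Fin n) ℂ)
    (hV : ∀ (σ : Equiv.Perm (Fin n)) (i j : Fin n), V σ i j = if i = σ j then 1 else 0) :
    ∃ W : Fin ((n - 1) ^ 2 + 1) → Matrix (Fin n) (Fin n) ℂ,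
      (∀ k, (W k)ᴴ * W k = 1 ∧ W k * (W k)ᴴ = 1) ∧
      ∀ X : Matrix (Fin n) (Fin n) ℂ,
        (1 / (n.factorial : ℂ)) • ∑ σ : Equiv.Perm (Fin n), V σ * X * (V σ)ᴴ =
          (1 / (((n - 1) ^ 2 + 1 : ℕ) : ℂ)) • ∑ k, W k * X * (W k)ᴴ := by
  rcases n with _ | m
  · exact ⟨fun _ => 1, fun _ => by simp, fun _ => Subsingleton.elim _ _⟩
  rw [Nat.add_sub_cancel, sq]
  have hW := twirlUnitary_mem_unitaryGroup m
  have hN : (m * m + 1 : ℂ) ≠ 0 := by exact_mod_cast Nat.succ_ne_zero (m * m)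
  refine ⟨fun k => twirlUnitary m k, fun k => ⟨mem_unitaryGroup_iff'.1 (hW k),
    mem_unitaryGroup_iff.1 (hW k)⟩, fun X => ?_⟩
  refine IsPermInvariant.eq_of_trace_eq ((isPermInvariant_sum_conj_of_apply hV X).smul _)
    ((isPermInvariant_sum_twirlUnitary_conj m X).smul _) ?_ ?_
  · rw [trace_smul, trace_smul, trace_sum_conj (mem_unitaryGroup_of_apply hV),
      trace_sum_conj fun k : Fin (m * m + 1) => hW k]
    simp [Fintype.card_perm, Nat.factorial_ne_zero, hN]
  · rw [Matrix.mul_smul, Matrix.mul_smul, trace_smul, trace_smul,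
      trace_allOnes_mul_sum_conj (mem_unitaryGroup_of_apply hV) (commute_allOnes_of_apply hV),
      trace_allOnes_mul_sum_conj (fun k : Fin (m * m + 1) => hW k)
        fun k => twirlUnitary_commute_allOnes m k]
    simp [Fintype.card_perm, Nat.factorial_ne_zero, hN]

/-- The permutation-twirling channel admits a mixed-unitary
decomposition as a uniform average of `N = (n−1)² + 1` unitary conjugations. -/
theorem stmt_15 (n : ℕ) (hn : 0 < n)
    (V : Equiv.Perm (Fin n) → Matrix (Fin n) (Fin n) ℂ)
    (hV : ∀ (σ : Equiv.Perm (Fin n)) (i j : Fin n), V σ i j = if i = σ j then 1 else 0) :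
    ∃ W : Fin ((n - 1) ^ 2 + 1) → Matrix (Fin n) (Fin n) ℂ,
      (∀ k, (W k)ᴴ * W k = 1 ∧ W k * (W k)ᴴ = 1) ∧
      ∀ X : Matrix (Fin n) (Fin n) ℂ,
        (1 / (n.factorial : ℂ)) • ∑ σ : Equiv.Perm (Fin n), V σ * X * (V σ)ᴴ =
          (1 / (((n - 1) ^ 2 + 1 : ℕ) : ℂ)) • ∑ k, W k * X * (W k)ᴴ :=
  stmt_15_general n V hV
end
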